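/- arXiv:cs/0702077 — 5 statements merged into one kernel-verified Lean document; each statement's English description precedes it below -/
import Mathlib

section
/- For n ≤ m and 0 < ρ < n, K_R(q^m,n,ρ) ≤ q^{max{m−ρ, n}·(n−ρ)}. -/
open scoped BigOperators

noncomputable section

/-- The rank weight of a vector over the extension field `Fqm`, with respect to the base
field `Fq`: the dimension over `Fq` of the `Fq`-span of the coordinates. -/
def rankWeight (Fq : Type) {Fqm : Type} [Field Fq] [Field Fqm] [Algebra Fq Fqm]
    {n : ℕ} (x : Fin n → Fqm) : ℕ :=
  Module.finrank Fq (Submodule.span Fq (Set.range x))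

/-- An elementary linear subspace: a subspace generated by vectors all of whose
coordinates lie in the base field `Fq`. -/
def IsELS (Fq : Type) {Fqm : Type} [Field Fq] [Field Fqm] [Algebra Fq Fqm]
    {n : ℕ} (V : Submodule Fqm (Fin n → Fqm)) : Prop :=
  ∃ S : Set (Fin n → Fqm),
    (∀ s ∈ S, ∀ i, s i ∈ Set.range (algebraMap Fq Fqm)) ∧
    V = Submodule.span Fqm S

/-- The ball of rank radius `r` centered at `c`. -/
def rankBall (Fq : Type) {Fqm : Type} [Field Fq] [Field Fqm] [Algebra Fq Fqm]
    {n : ℕ} (r : ℕ) (c : Fin n → Fqm) : Set (Fin n → Fqm) :=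
  {y | rankWeight Fq (y - c) ≤ r}

/-- `V_r(q^m, n)`: the volume of a ball of rank radius `r`. -/
def ballVol (Fq Fqm : Type) [Field Fq] [Field Fqm] [Algebra Fq Fqm]
    (n r : ℕ) : ℕ :=
  Nat.card ↥(rankBall Fq r (0 : Fin n → Fqm))

/-- `K_R(q^m, n, ρ)`: minimum cardinality of a nonempty code of length `n` with rank
covering radius at most `ρ`. -/
def coveringNumber (Fq Fqm : Type) [Field Fq] [Field Fqm] [Algebra Fq Fqm]
    (n ρ : ℕ) : ℕ :=
  sInf {k : ℕ | ∃ C : Finset (Fin n → Fqm), C.Nonempty ∧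
    (∀ x : Fin n → Fqm, ∃ c ∈ C, rankWeight Fq (x - c) ≤ ρ) ∧ C.card = k}

/-- `σ(q) = (1/ln q) Σ_{k≥1} 1/(k(q^k - 1))`. -/
def sigmaQ (q : ℕ) : ℝ :=
  (1 / Real.log q) * ∑' k : ℕ, 1 / (((k : ℝ) + 1) * ((q : ℝ) ^ (k + 1) - 1))

/-- `α(e, u) = ∏_{i=0}^{u-1} (q^e - q^i)` (with integer exponent `e`). -/
def alphaQ (q : ℕ) (e : ℤ) (u : ℕ) : ℚ :=
  ∏ i ∈ Finset.range u, ((q : ℚ) ^ e - (q : ℚ) ^ i)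

/-- The Gaussian binomial `[n u]_q = α(n,u)/α(u,u)`. -/
def gaussQ (q n u : ℕ) : ℚ := alphaQ q n u / alphaQ q u u


namespace Stmt11Aux

open Polynomial

variable (Fq : Type) [Field Fq] [Fintype Fq] (K : ℕ)

/-- big field: splitting field of X^(q^K) - X over Fq -/
def BigF : Type := SplittingField (X ^ (Fintype.card Fq) ^ K - X : Fq[X])

instance : Field (BigF Fq K) := inferInstanceAs (Field (SplittingField _))
instance : Algebra Fq (BigF Fq K) := SplittingField.instAlgebra_1 _
instance : FiniteDimensional Fq (BigF Fq K) := by dsimp only [BigF]; exact Polynomial.IsSplittingField.finiteDimensional _ (X ^ (Fintype.card Fq) ^ K - X : Fq[X])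
instance : Finite (BigF Fq K) := Module.finite_of_finite Fq

theorem BigF.finrank (hK : K ≠ 0) : Module.finrank Fq (BigF Fq K) = K := by
  haveI : Fintype (BigF Fq K) := Fintype.ofFinite _
  set q := Fintype.card Fq with hq
  have hq1 : 1 < q := Fintype.one_lt_card
  set p := ringChar Fq with hp
  haveI : CharP Fq p := ringChar.charP Fq
  obtain ⟨e, hpprime, hqpe⟩ := FiniteField.card Fq p
  haveI : Fact p.Prime := ⟨hpprime⟩
  haveI hcharF : CharP (BigF Fq K) p :=
    (Algebra.charP_iff Fq (BigF Fq K) p).mp inferInstance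
  have hpq' : p ∣ q := by rw [hq, hqpe]; exact dvd_pow_self p e.2.ne'
  have hpq : p ∣ q ^ K := dvd_pow hpq' hK
  have hqK : q ^ K = p ^ (e * K) := by rw [hq, hqpe, ← pow_mul]
  set g_poly := (X ^ q ^ K - X : Fq[X]) with hg
  have aux : g_poly ≠ 0 := FiniteField.X_pow_card_pow_sub_X_ne_zero _ hK hq1
  have key : Fintype.card (g_poly.rootSet (BigF Fq K)) = g_poly.natDegree :=
    card_rootSet_eq_natDegree (galois_poly_separable p _ hpq)
      (SplittingField.splits g_poly)
  have nat_degree_eq : g_poly.natDegree = q ^ K :=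
    FiniteField.X_pow_card_pow_sub_X_natDegree_eq _ hK hq1
  rw [nat_degree_eq] at key
  suffices hU : g_poly.rootSet (BigF Fq K) = Set.univ by
    simp_rw [hU, ← Fintype.ofEquiv_card (Equiv.Set.univ _)] at key
    rw [@Module.card_eq_pow_finrank Fq _ _ _ _ _ (_)] at key
    exact Nat.pow_right_injective hq1 key
  rw [Set.eq_univ_iff_forall]
  suffices h2 : ∀ (x) (_ : x ∈ (⊤ : Subalgebra Fq (BigF Fq K))),
      x ∈ g_poly.rootSet (BigF Fq K) by
    intro x; exact h2 x trivial
  have hasf : IsSplittingField Fq (BigF Fq K) g_poly :=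
    Polynomial.IsSplittingField.splittingField _
  rw [← Polynomial.IsSplittingField.adjoin_rootSet (BigF Fq K) g_poly]
  simp_rw [Algebra.mem_adjoin_iff]
  intro x hx
  refine Subring.closure_induction ?_ ?_ ?_ ?_ ?_ ?_ hx <;> simp_rw [mem_rootSet_of_ne aux]
  · rintro x (⟨r, rfl⟩ | hx)
    · simp only [g_poly, map_sub, map_pow, aeval_X]
      rw [← map_pow, FiniteField.pow_card_pow, sub_self]
    · have hx' : x ∈ g_poly.rootSet (BigF Fq K) := hx
      rwa [mem_rootSet_of_ne aux] at hx'
  · rw [← coeff_zero_eq_aeval_zero']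
    simp only [g_poly, coeff_X_pow, coeff_X_zero, sub_zero, _root_.map_eq_zero, ite_eq_right_iff,
      one_ne_zero, coeff_sub]
    intro hn
    exact Nat.not_lt_zero 1 (eq_zero_of_pow_eq_zero hn.symm ▸ hq1)
  · simp [g_poly]
  · simp only [g_poly, aeval_X_pow, aeval_X, map_sub, sub_eq_zero]
    intro x y _ _ hx hy
    rw [hqK] at hx hy ⊢
    rw [add_pow_char_pow, hx, hy]
  · intro x _ hx
    simp only [g_poly, sub_eq_zero, aeval_X_pow, aeval_X, map_sub, sub_neg_eq_add] at *
    rw [hqK] at hx ⊢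
    rw [neg_pow, hx, neg_one_pow_char_pow]
    simp
  · simp only [g_poly, aeval_X_pow, aeval_X, map_sub, mul_pow, sub_eq_zero]
    intro x y _ _ hx hy
    rw [hx, hy]


section QLin

variable {Fq : Type} [Field Fq] [Fintype Fq] {F : Type} [Field F] [Algebra Fq F]

/-- frobenius powers are additive -/
theorem frob_add (jj : ℕ) (u w : F) :
    (u + w) ^ (Fintype.card Fq) ^ jj = u ^ (Fintype.card Fq) ^ jj + w ^ (Fintype.card Fq) ^ jj := by
  set p := ringChar Fq with hp
  haveI : CharP Fq p := ringChar.charP Fq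
  obtain ⟨e, hpprime, hqpe⟩ := FiniteField.card Fq p
  haveI : Fact p.Prime := ⟨hpprime⟩
  haveI : CharP F p := (Algebra.charP_iff Fq F p).mp inferInstance
  rw [show (Fintype.card Fq) ^ jj = p ^ (e * jj) by rw [hqpe, ← pow_mul]]
  exact add_pow_char_pow u w p (e * jj)

/-- The `q`-linearized polynomial map `x ↦ ∑ a j * x^(q^j)` as an `Fq`-linear map. -/
def qLin {s : ℕ} (a : Fin s → F) : F →ₗ[Fq] F where
  toFun x := ∑ j : Fin s, a j * x ^ ((Fintype.card Fq) ^ (j : ℕ))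
  map_add' x y := by
    rw [← Finset.sum_add_distrib]
    refine Finset.sum_congr rfl fun j _ => ?_
    rw [frob_add (Fq := Fq), mul_add]
  map_smul' c x := by
    simp only [RingHom.id_apply, Finset.smul_sum]
    refine Finset.sum_congr rfl fun j _ => ?_
    rw [Algebra.smul_def, Algebra.smul_def, mul_pow, ← map_pow, FiniteField.pow_card_pow]
    ring

theorem qLin_apply {s : ℕ} (a : Fin s → F) (x : F) :
    qLin (Fq := Fq) a x = ∑ j : Fin s, a j * x ^ ((Fintype.card Fq) ^ (j : ℕ)) := rfl

/-- kernel of a nonzero q-linearized polynomial map of q-degree < s has dimension < s -/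
theorem finrank_ker_qLin_lt [FiniteDimensional Fq F] {s : ℕ} (hs : 0 < s)
    {a : Fin s → F} (ha : a ≠ 0) :
    Module.finrank Fq (LinearMap.ker (qLin (Fq := Fq) a)) < s := by
  classical
  set q := Fintype.card Fq with hq
  have hq1 : 1 < q := Fintype.one_lt_card
  set P : Polynomial F := ∑ j : Fin s, Polynomial.C (a j) * Polynomial.X ^ (q ^ (j : ℕ)) with hP
  obtain ⟨j0, hj0⟩ : ∃ j0, a j0 ≠ 0 := by
    by_contra h
    push_neg at h
    exact ha (funext fun j => h j)
  have hPne : P ≠ 0 := by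
    intro h
    have hc : P.coeff (q ^ (j0 : ℕ)) = a j0 := by
      rw [hP, Polynomial.finset_sum_coeff]
      rw [Finset.sum_eq_single j0]
      · simp [Polynomial.coeff_C_mul, Polynomial.coeff_X_pow]
      · intro j _ hj
        simp only [Polynomial.coeff_C_mul, Polynomial.coeff_X_pow]
        rw [if_neg, mul_zero]
        exact fun hcon => hj (Fin.ext (Nat.pow_right_injective hq1 hcon.symm))
      · simp
    rw [h] at hc
    exact hj0 (by simpa using hc.symm)
  have hdeg : P.natDegree ≤ q ^ (s - 1) := by
    refine Polynomial.natDegree_sum_le_of_forall_le _ _ fun j _ => ?_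
    refine le_trans (Polynomial.natDegree_C_mul_le _ _) ?_
    rw [Polynomial.natDegree_X_pow]
    exact Nat.pow_le_pow_right (by omega) (by omega)
  -- every element of the kernel is a root of P
  have hroot : ∀ x : F, x ∈ LinearMap.ker (qLin (Fq := Fq) a) → x ∈ P.roots.toFinset := by
    intro x hx
    rw [Multiset.mem_toFinset, Polynomial.mem_roots hPne]
    rw [Polynomial.IsRoot, hP]
    rw [Polynomial.eval_finset_sum]
    simpa [qLin_apply] using hx
  haveI : Finite F := Module.finite_of_finite Fq
  haveI : Fintype F := Fintype.ofFinite F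
  have hcard : Fintype.card (LinearMap.ker (qLin (Fq := Fq) a)) ≤ q ^ (s - 1) := by
    have : Fintype.card (LinearMap.ker (qLin (Fq := Fq) a)) ≤ P.roots.toFinset.card := by
      rw [← Fintype.card_coe P.roots.toFinset]
      refine Fintype.card_le_of_injective
        (fun z : LinearMap.ker (qLin (Fq := Fq) a) =>
          (⟨z.1, hroot z.1 z.2⟩ : {y // y ∈ P.roots.toFinset})) ?_
      intro z1 z2 h
      have h2 := congrArg Subtype.val h
      exact Subtype.ext h2
    refine le_trans this (le_trans (Multiset.toFinset_card_le _) ?_)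
    exact le_trans (Polynomial.card_roots' P) hdeg
  rw [Module.card_eq_pow_finrank (K := Fq) (V := LinearMap.ker (qLin (Fq := Fq) a))] at hcard
  have := lt_of_le_of_lt hcard (Nat.pow_lt_pow_right hq1 (by omega) : q ^ (s-1) < q ^ s)
  exact (Nat.pow_lt_pow_iff_right hq1).mp this

end QLin

section Helpers

variable {Fq : Type} [Field Fq] {M M' : Type} [AddCommGroup M] [Module Fq M]
  [AddCommGroup M'] [Module Fq M']

theorem finrank_le_map_add_ker [FiniteDimensional Fq M] [FiniteDimensional Fq M']
    (f : M →ₗ[Fq] M') (G : Submodule Fq M) :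
    Module.finrank Fq G ≤ Module.finrank Fq (G.map f) + Module.finrank Fq (LinearMap.ker f) := by
  have h1 := LinearMap.finrank_range_add_finrank_ker (f ∘ₗ G.subtype)
  rw [LinearMap.range_comp, Submodule.range_subtype] at h1
  have h2 : Module.finrank Fq (LinearMap.ker (f ∘ₗ G.subtype))
      ≤ Module.finrank Fq (LinearMap.ker f) := by
    have e := Submodule.equivMapOfInjective G.subtype (Submodule.injective_subtype G)
      (LinearMap.ker (f ∘ₗ G.subtype))
    rw [e.finrank_eq]
    refine Submodule.finrank_mono ?_
    rintro y hy
    obtain ⟨z, hz, rfl⟩ := hy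
    simpa [LinearMap.mem_ker] using hz
  omega

theorem extend_indep [FiniteDimensional Fq M] :
    ∀ (k d : ℕ) (v : Fin d → M), LinearIndependent Fq v → d + k ≤ Module.finrank Fq M →
      ∃ w : Fin (d + k) → M, LinearIndependent Fq w ∧ ∀ x, x ∈ Set.range v → x ∈ Set.range w := by
  intro k
  induction k with
  | zero => exact fun d v hv _ => ⟨v, hv, fun x hx => hx⟩
  | succ k ih =>
    intro d v hv hle
    obtain ⟨w, hw, hsub⟩ := ih d v hv (by omega)
    have hrank : ((d + k : ℕ) : Cardinal) < Module.rank Fq M := by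
      rw [← Module.finrank_eq_rank]
      exact_mod_cast (by omega : d + k < Module.finrank Fq M)
    obtain ⟨x, hx⟩ := exists_linearIndependent_snoc_of_lt_rank hw hrank
    refine ⟨Fin.snoc w x, hx, fun y hy => ?_⟩
    obtain ⟨i, rfl⟩ := hsub y hy
    exact ⟨Fin.castSucc i, by simp⟩

theorem exists_indep_superset [FiniteDimensional Fq M] {d r : ℕ} (t : Fin d → M) (hd : d ≤ r)
    (hr : r ≤ Module.finrank Fq M) :
    ∃ v : Fin r → M, LinearIndependent Fq v ∧ ∀ i, t i ∈ Submodule.span Fq (Set.range v) := by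
  classical
  set U := Submodule.span Fq (Set.range t) with hUdef
  have hU : Module.finrank Fq U ≤ d := by
    refine le_trans (finrank_span_le_card (Set.range t)) ?_
    rw [Set.toFinset_range]
    exact le_trans Finset.card_image_le (by simp)
  set d0 := Module.finrank Fq U with hd0
  set b := Module.finBasis Fq U with hb0
  have hb : LinearIndependent Fq (fun i => ((b i : U) : M)) :=
    b.linearIndependent.map' U.subtype (Submodule.ker_subtype U)
  have hUle : Module.finrank Fq U ≤ Module.finrank Fq M := Submodule.finrank_le U
  obtain ⟨w, hw, hsub⟩ := extend_indep (r - d0) d0 _ hb (by omega)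
  have hcast : d0 + (r - d0) = r := by omega
  have hspanU : Submodule.span Fq (Set.range (fun i => ((b i : U) : M))) = U := by
    have h1 : Set.range (fun i => ((b i : U) : M)) = U.subtype '' Set.range b := by
      rw [← Set.range_comp]; rfl
    rw [h1, ← Submodule.map_span, b.span_eq, Submodule.map_subtype_top]
  refine ⟨w ∘ (finCongr hcast.symm), hw.comp _ (finCongr hcast.symm).injective, ?_⟩
  have hrange : Set.range (w ∘ (finCongr hcast.symm)) = Set.range w :=
    Function.Surjective.range_comp (finCongr hcast.symm).surjective w
  rw [hrange]
  intro i
  have hti : t i ∈ U := Submodule.subset_span ⟨i, rfl⟩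
  have hUspan : U ≤ Submodule.span Fq (Set.range w) := by
    rw [← hspanU]
    exact Submodule.span_mono (fun x hx => hsub x hx)
  exact hUspan hti

theorem sum_split {A : Type} [AddCommMonoid A] {K m : ℕ} (hKm : K ≤ m) (f : Fin m → A) :
    ∑ i : Fin m, f i = (∑ i : Fin K, f (Fin.castLE hKm i)) +
      ∑ r : Fin (m - K), f ⟨K + (r : ℕ), by omega⟩ := by
  rw [← Equiv.sum_comp ((finSumFinEquiv (m := K) (n := m - K)).trans
    (finCongr (show K + (m - K) = m by omega))) f, Fintype.sum_sum_type]
  refine congrArg₂ (· + ·) ?_ ?_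
  · exact Finset.sum_congr rfl fun i _ => by congr 1
  · exact Finset.sum_congr rfl fun r _ => by congr 1

end Helpers

section RW

variable {Fq Fqm : Type} [Field Fq] [Field Fqm] [Algebra Fq Fqm]

theorem rankWeight_le_of_mem_span {n r : ℕ} (x : Fin n → Fqm) (v : Fin r → Fqm)
    (h : ∀ j, x j ∈ Submodule.span Fq (Set.range v)) :
    rankWeight Fq x ≤ r := by
  classical
  have hle : Submodule.span Fq (Set.range x) ≤ Submodule.span Fq (Set.range v) := by
    rw [Submodule.span_le]
    rintro _ ⟨j, rfl⟩
    exact h j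
  haveI : FiniteDimensional Fq (Submodule.span Fq (Set.range v)) :=
    FiniteDimensional.span_of_finite Fq (Set.finite_range v)
  refine le_trans (Submodule.finrank_mono hle) ?_
  refine le_trans (finrank_span_le_card (Set.range v)) ?_
  rw [Set.toFinset_range]
  exact le_trans Finset.card_image_le (by simp)

/-- Fq-linearly independent vectors in Fq^n stay independent after coordinatewise
inclusion into F^n. -/
theorem indep_algebraMap {r n : ℕ} {F : Type} [Field F] [Algebra Fq F]
    [FiniteDimensional Fq F] {v : Fin r → Fin n → Fq} (hv : LinearIndependent Fq v) :
    LinearIndependent F (fun l => (fun j => algebraMap Fq F (v l j))) := by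
  classical
  rw [Fintype.linearIndependent_iff] at hv ⊢
  intro x hx l
  set bF := Module.finBasis Fq F with hbF
  have hcoord : ∀ j : Fin n, (∑ l' : Fin r, (v l' j) • x l') = 0 := by
    intro j
    have h1 := congrFun hx j
    simpa [Algebra.smul_def, mul_comm] using h1
  have main : ∀ r' : Fin (Module.finrank Fq F), ∀ l', bF.repr (x l') r' = 0 := by
    intro r'
    refine hv (fun l' => bF.repr (x l') r') ?_
    funext j
    have h2 : bF.repr (∑ l' : Fin r, (v l' j) • x l') r' = 0 := by
      rw [hcoord j]
      simp
    rw [map_sum] at h2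
    simp only [map_smul, Finsupp.smul_apply, smul_eq_mul] at h2
    simpa [Finset.sum_apply, smul_eq_mul, mul_comm] using h2
  have h0 : bF.repr (x l) = 0 := Finsupp.ext fun r' => main r' l
  have h3 := congrArg bF.repr.symm h0
  simpa using h3

end RW

section Gab

variable {Fq : Type} [Field Fq] [Fintype Fq] {F : Type} [Field F] [Algebra Fq F]

/-- The Gabidulin encoder: `a ↦ (∑ j, a j * (g i)^(q^j))_i`, `F`-linear in `a`. -/
def gab {n : ℕ} (s : ℕ) (g : Fin n → F) : (Fin s → F) →ₗ[F] (Fin n → F) where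
  toFun a := fun i => qLin (Fq := Fq) a (g i)
  map_add' a b := by
    funext i
    simp [qLin_apply, add_mul, Finset.sum_add_distrib]
  map_smul' c a := by
    funext i
    simp [qLin_apply, Finset.mul_sum, mul_assoc]

set_option maxHeartbeats 2000000 in
theorem master {Fqm : Type} [Field Fqm] [Algebra Fq Fqm]
    [FiniteDimensional Fq F] [FiniteDimensional Fq Fqm]
    {n ρ K m : ℕ}
    (hF : Module.finrank Fq F = K) (hm : Module.finrank Fq Fqm = m)
    (hKn : n ≤ K) (hKm : K ≤ m) (hmK : m - K ≤ ρ) (hρ2 : ρ < n) :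
    ∃ C : Finset (Fin n → Fqm), C.Nonempty ∧
      (∀ x : Fin n → Fqm, ∃ c ∈ C, rankWeight Fq (x - c) ≤ ρ) ∧
      C.card ≤ (Fintype.card Fq) ^ (K * (n - ρ)) := by
  classical
  haveI : Finite F := Module.finite_of_finite Fq
  haveI : Fintype F := Fintype.ofFinite F
  have hq1 : 1 < Fintype.card Fq := Fintype.one_lt_card
  set s := n - ρ with hs
  have hs0 : 0 < s := by omega
  set bF := Module.finBasisOfFinrankEq Fq F hF with hbF
  set bm := Module.finBasisOfFinrankEq Fq Fqm hm with hbm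
  set g : Fin n → F := fun i => bF (Fin.castLE hKn i) with hg
  set φ : F →ₗ[Fq] Fqm := Module.Basis.constr bF Fq (fun i => bm (Fin.castLE hKm i)) with hφ
  set E := gab (Fq := Fq) s g with hE
  set D := LinearMap.range E with hD
  have hgind : LinearIndependent Fq g := bF.linearIndependent.comp _ (Fin.castLE_injective hKn)
  have hgspan : Module.finrank Fq (Submodule.span Fq (Set.range g)) = n := by
    rw [finrank_span_eq_card hgind, Fintype.card_fin]
  have hker : ∀ a : Fin s → F, a ≠ 0 →
      Module.finrank Fq (LinearMap.ker (qLin (Fq := Fq) a)) < s :=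
    fun a ha => finrank_ker_qLin_lt hs0 ha
  have hginker : ∀ a : Fin s → F, E a = 0 → a = 0 := by
    intro a hEa
    by_contra ha
    have hsub : Submodule.span Fq (Set.range g) ≤ LinearMap.ker (qLin (Fq := Fq) a) := by
      rw [Submodule.span_le]
      rintro _ ⟨i, rfl⟩
      have h0 : E a i = 0 := by rw [hEa]; rfl
      exact LinearMap.mem_ker.mpr h0
    have hle := Submodule.finrank_mono hsub
    rw [hgspan] at hle
    have := hker a ha
    omega
  have hEinj : Function.Injective E := by
    rw [← LinearMap.ker_eq_bot, LinearMap.ker_eq_bot']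
    intro a ha
    exact hginker a ha
  have hDrank : Module.finrank F D = s := by
    rw [hD, LinearMap.finrank_range_of_inj hEinj, Module.finrank_fin_fun]
  have hmin : ∀ a : Fin s → F, a ≠ 0 → ρ < rankWeight Fq (E a) := by
    intro a ha
    have hrg : Set.range (E a) = ⇑(qLin (Fq := Fq) a) '' Set.range g := by
      rw [← Set.range_comp]; rfl
    have hmap : Submodule.span Fq (Set.range (E a)) =
        (Submodule.span Fq (Set.range g)).map (qLin (Fq := Fq) a) := by
      rw [hrg, Submodule.map_span]
    have h1 := finrank_le_map_add_ker (qLin (Fq := Fq) a) (Submodule.span Fq (Set.range g))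
    rw [hgspan] at h1
    have h2 := hker a ha
    show ρ < Module.finrank Fq (Submodule.span Fq (Set.range (E a)))
    rw [hmap]
    omega
  -- the code
  set C : Finset (Fin n → Fqm) :=
    Finset.image (fun w : Fin s → F => fun j => φ (E w j)) Finset.univ with hC
  refine ⟨C, ?_, ?_, ?_⟩
  · exact Finset.Nonempty.image Finset.univ_nonempty _
  · -- covering
    intro x
    set t : Fin (m - K) → (Fin n → Fq) :=
      fun r j => bm.repr (x j) ⟨K + (r : ℕ), by omega⟩ with ht
    obtain ⟨v, hvind, hvspan⟩ := exists_indep_superset t hmK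
      (by rw [Module.finrank_fin_fun]; omega)
    set ιv : Fin ρ → (Fin n → F) := fun l => (fun j => algebraMap Fq F (v l j)) with hιv
    have hιind : LinearIndependent F ιv := indep_algebraMap hvind
    set S := Submodule.span F (Set.range ιv) with hS
    have hSrank : Module.finrank F S = ρ := by
      rw [hS, finrank_span_eq_card hιind, Fintype.card_fin]
    have hint : D ⊓ S = ⊥ := by
      rw [eq_bot_iff]
      rintro y ⟨hyD, hyS⟩
      obtain ⟨a, rfl⟩ := hyD
      rcases eq_or_ne a 0 with rfl | ha
      · simp
      · exfalso
        obtain ⟨c, hc⟩ := (Submodule.mem_span_range_iff_exists_fun F).mp hyS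
        have hle : rankWeight Fq (E a) ≤ ρ := by
          refine rankWeight_le_of_mem_span _ c ?_
          intro j
          rw [← hc]
          have hgoal : (∑ l, c l • ιv l) j = ∑ l, (v l j) • (c l) := by
            simp [hιv, Algebra.smul_def, mul_comm, Finset.sum_apply]
          rw [hgoal]
          exact Submodule.sum_mem _ fun l _ =>
            Submodule.smul_mem _ _ (Submodule.subset_span ⟨l, rfl⟩)
        have := hmin a ha
        omega
    have hsup : D ⊔ S = ⊤ := by
      refine Submodule.eq_top_of_finrank_eq ?_
      have h1 := Submodule.finrank_sup_add_finrank_inf_eq D S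
      rw [hint, finrank_bot] at h1
      rw [Module.finrank_fin_fun]
      omega
    set avec : Fin n → F :=
      fun j => ∑ i : Fin K, (bm.repr (x j) (Fin.castLE hKm i)) • bF i with havec
    have hmem : avec ∈ D ⊔ S := hsup ▸ Submodule.mem_top
    obtain ⟨yD, hyD, yS, hyS, hsum⟩ := Submodule.mem_sup.mp hmem
    obtain ⟨w, rfl⟩ := hyD
    obtain ⟨c, hc⟩ := (Submodule.mem_span_range_iff_exists_fun F).mp hyS
    choose sc hsc using fun r => (Submodule.mem_span_range_iff_exists_fun Fq).mp (hvspan r)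
    set V : Fin ρ → Fqm := fun l => φ (c l) +
      ∑ r : Fin (m - K), (sc r l) • bm ⟨K + (r : ℕ), by omega⟩ with hV
    refine ⟨fun j => φ (E w j), Finset.mem_image_of_mem _ (Finset.mem_univ w), ?_⟩
    refine rankWeight_le_of_mem_span _ V ?_
    intro j
    have step1 : x j - φ (avec j) =
        ∑ r : Fin (m - K), (t r j) • bm ⟨K + (r : ℕ), by omega⟩ := by
      have hphiav : φ (avec j) =
          ∑ i : Fin K, (bm.repr (x j) (Fin.castLE hKm i)) • bm (Fin.castLE hKm i) := by
        simp only [havec, map_sum, map_smul]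
        refine Finset.sum_congr rfl fun i _ => ?_
        rw [hφ, Module.Basis.constr_basis]
      have hsplit := sum_split hKm (fun i => (bm.repr (x j) i) • bm i)
      rw [bm.sum_repr (x j)] at hsplit
      rw [hphiav, sub_eq_iff_eq_add]
      refine hsplit.trans ?_
      rw [add_comm]
    have step2 : φ (yS j) = ∑ l, (v l j) • φ (c l) := by
      have hySj : yS j = ∑ l, (v l j) • (c l) := by
        rw [← hc]
        simp [hιv, Algebra.smul_def, mul_comm, Finset.sum_apply]
      rw [hySj, map_sum]
      refine Finset.sum_congr rfl fun l _ => ?_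
      rw [map_smul]
    have step3 : (∑ r : Fin (m - K), (t r j) • bm ⟨K + (r : ℕ), by omega⟩ : Fqm) =
        ∑ l, (v l j) • (∑ r : Fin (m - K), (sc r l) • bm ⟨K + (r : ℕ), by omega⟩) := by
      have htr : ∀ r : Fin (m - K), t r j = ∑ l, (sc r l) * (v l j) := by
        intro r
        rw [← hsc r]
        simp [Finset.sum_apply, smul_eq_mul]
      calc (∑ r : Fin (m - K), (t r j) • bm ⟨K + (r : ℕ), by omega⟩ : Fqm)
          = ∑ r : Fin (m - K), ∑ l, ((sc r l) * (v l j)) • bm ⟨K + (r : ℕ), by omega⟩ := by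
            refine Finset.sum_congr rfl fun r _ => ?_
            rw [htr r, Finset.sum_smul]
        _ = ∑ l, ∑ r : Fin (m - K), ((sc r l) * (v l j)) • bm ⟨K + (r : ℕ), by omega⟩ :=
            Finset.sum_comm
        _ = ∑ l, (v l j) • (∑ r : Fin (m - K), (sc r l) • bm ⟨K + (r : ℕ), by omega⟩) := by
            refine Finset.sum_congr rfl fun l _ => ?_
            rw [Finset.smul_sum]
            refine Finset.sum_congr rfl fun r _ => ?_
            rw [mul_comm, mul_smul]
    have key : (x - fun j' => φ (E w j')) j = ∑ l, (v l j) • V l := by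
      have hEwj : φ (E w j) = φ (avec j) - φ (yS j) := by
        have : E w j = avec j - yS j := by
          have := congrFun hsum j
          simp only [Pi.add_apply] at this
          rw [← this]
          ring
        rw [this, map_sub]
      have : (x - fun j' => φ (E w j')) j = (x j - φ (avec j)) + φ (yS j) := by
        simp only [Pi.sub_apply, hEwj]
        ring
      rw [this, step1, step2, step3, ← Finset.sum_add_distrib]
      refine Finset.sum_congr rfl fun l _ => ?_
      rw [hV, smul_add, add_comm]
    rw [key]
    exact Submodule.sum_mem _ fun l _ =>
      Submodule.smul_mem _ _ (Submodule.subset_span ⟨l, rfl⟩)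
  · -- cardinality
    refine le_trans Finset.card_image_le ?_
    rw [Finset.card_univ, Fintype.card_fun]
    rw [Module.card_eq_pow_finrank (K := Fq) (V := F), hF, Fintype.card_fin]
    rw [← pow_mul]

end Gab


end Stmt11Aux

/-- Upper bound on the covering number from MRD codes:
`K_R(q^m,n,ρ) ≤ q^{max{m-ρ, n}(n-ρ)}`. -/
theorem stmt11 (q m n ρ : ℕ) (Fq Fqm : Type) [Field Fq] [Fintype Fq] [Field Fqm] [Fintype Fqm]
    [Algebra Fq Fqm] (hq : Fintype.card Fq = q) (hm : Module.finrank Fq Fqm = m)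
    (hnm : n ≤ m) (hρ1 : 0 < ρ) (hρ2 : ρ < n) :
    coveringNumber Fq Fqm n ρ ≤ q ^ (max (m - ρ) n * (n - ρ)) := by
  classical
  have hKle : m - ρ ≤ max (m - ρ) n := le_max_left _ _
  have hKn : n ≤ max (m - ρ) n := le_max_right _ _
  have hKm : max (m - ρ) n ≤ m := max_le (by omega) hnm
  have hmK : m - max (m - ρ) n ≤ ρ := by omega
  have hK0 : max (m - ρ) n ≠ 0 := by omega
  obtain ⟨C, hne, hcov, hcard⟩ :=
    Stmt11Aux.master (F := Stmt11Aux.BigF Fq (max (m - ρ) n)) (Fqm := Fqm)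
      (Stmt11Aux.BigF.finrank Fq _ hK0) hm hKn hKm hmK hρ2
  unfold coveringNumber
  refine le_trans (Nat.sInf_le ⟨C, hne, hcov, rfl⟩) ?_
  rw [← hq]
  exact hcard

end
end

section
/- For all m, n ≤ m, and ρ < n, K_R(q^m,n,ρ) ≤ (q^{mn}/V_ρ(q^m,n))·(1 + ln(V_ρ(q^m,n))). -/
open scoped BigOperators

noncomputable section

/-! ### Auxiliary lemmas for the Stein–Lovász bound -/

lemma rankWeight_zero (Fq : Type) {Fqm : Type} [Field Fq] [Field Fqm] [Algebra Fq Fqm]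
    {n : ℕ} : rankWeight Fq (0 : Fin n → Fqm) = 0 := by
  have h : Submodule.span Fq (Set.range (0 : Fin n → Fqm)) = ⊥ :=
    Submodule.span_eq_bot.mpr (by rintro x ⟨i, rfl⟩; rfl)
  unfold rankWeight
  rw [h, finrank_bot]

lemma rankWeight_neg (Fq : Type) {Fqm : Type} [Field Fq] [Field Fqm] [Algebra Fq Fqm]
    {n : ℕ} (x : Fin n → Fqm) : rankWeight Fq (-x) = rankWeight Fq x := by
  have hspan : Submodule.span Fq (Set.range (-x)) = Submodule.span Fq (Set.range x) := by
    apply le_antisymm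
    · rw [Submodule.span_le]
      rintro _ ⟨i, rfl⟩
      show (-x) i ∈ _
      have h : (-x) i = -(x i) := rfl
      rw [h]
      exact neg_mem (Submodule.subset_span ⟨i, rfl⟩)
    · rw [Submodule.span_le]
      rintro _ ⟨i, rfl⟩
      show x i ∈ _
      have h : x i = -((-x) i) := by simp
      rw [h]
      exact neg_mem (Submodule.subset_span ⟨i, rfl⟩)
  unfold rankWeight
  rw [hspan]

/-- The Stein–Lovász potential function. -/
def SLF (N V u : ℕ) : ℝ :=
  if u * V ≤ N then (u : ℝ)
  else ((N : ℝ) / (V : ℝ)) * (Real.log ((u : ℝ) * (V : ℝ) / (N : ℝ)) + 1)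

set_option maxHeartbeats 1000000 in
lemma SLF_step (N V u u' : ℕ) (hN : 1 ≤ N) (hV : 1 ≤ V) (hVN : V ≤ N) (huN : u ≤ N)
    (hbig : N < u * V) (hrec : N * u' + u * V ≤ N * u) :
    1 + SLF N V u' ≤ SLF N V u := by
  have hu1 : 1 ≤ u := by
    rcases Nat.eq_zero_or_pos u with h | h
    · subst h; simp at hbig
    · exact h
  have hνpos : (0:ℝ) < (N:ℝ) := by exact_mod_cast hN
  have hvpos : (0:ℝ) < (V:ℝ) := by exact_mod_cast hV
  have hapos : (0:ℝ) < (u:ℝ) := by exact_mod_cast hu1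
  have hvν : (V:ℝ) ≤ (N:ℝ) := by exact_mod_cast hVN
  have haν : (u:ℝ) ≤ (N:ℝ) := by exact_mod_cast huN
  have hbigR : (N:ℝ) < (u:ℝ) * (V:ℝ) := by exact_mod_cast hbig
  have hrecR : (N:ℝ) * (u':ℝ) + (u:ℝ) * (V:ℝ) ≤ (N:ℝ) * (u:ℝ) := by exact_mod_cast hrec
  have hnotle : ¬ (u * V ≤ N) := not_le.mpr hbig
  rw [SLF, SLF, if_neg hnotle]
  split_ifs with hc
  · -- case `u' * V ≤ N`
    set ν : ℝ := (N:ℝ) with hν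
    set v : ℝ := (V:ℝ) with hv
    set a : ℝ := (u:ℝ) with ha'
    set b : ℝ := (u':ℝ) with hb'
    set A : ℝ := ν / v with hA
    set s : ℝ := a * v / ν with hs
    set L : ℝ := Real.log s with hLdef
    clear_value ν v a b A s L
    have hcR : b * v ≤ ν := by rw [hb', hv, hν]; exact_mod_cast hc
    have hApos : 0 < A := by rw [hA]; positivity
    have hs1 : 1 < s := by rw [hs, lt_div_iff₀ hνpos]; linarith
    have hspos : 0 < s := by linarith
    have hsν : s * ν = a * v := by rw [hs]; exact div_mul_cancel₀ _ (ne_of_gt hνpos)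
    have ha : a = s * A := by rw [hs, hA]; field_simp
    have hb : b ≤ a - s := by nlinarith [hsν, hrecR, hνpos]
    have hLub : L ≤ s - 1 := by rw [hLdef]; exact Real.log_le_sub_one_of_pos hspos
    have hLlb : s - 1 ≤ s * L := by
      have h1 : Real.log s⁻¹ ≤ s⁻¹ - 1 := Real.log_le_sub_one_of_pos (by positivity)
      rw [Real.log_inv, ← hLdef] at h1
      have h3 : s * (-L) ≤ s * (s⁻¹ - 1) := mul_le_mul_of_nonneg_left h1 (le_of_lt hspos)
      have h4 : s * (s⁻¹ - 1) = 1 - s := by field_simp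
      nlinarith
    have hbA : b ≤ A := by
      rw [hA, le_div_iff₀ hvpos]; nlinarith [hcR]
    show 1 + b ≤ A * (L + 1)
    by_cases h2 : a - s ≤ A
    · have hAs : A * (s - 1) ≤ s := by nlinarith [h2, ha]
      have hkey : A * (s - 1) * (s - 1 - L) ≤ s * (s - 1 - L) :=
        mul_le_mul_of_nonneg_right hAs (by linarith)
      have hs1' : (0:ℝ) < s - 1 := by linarith
      have hgoal : A * (s - 1 - L) ≤ s - 1 := by
        nlinarith [hkey, hLlb, hs1']
      nlinarith [hb, ha, hgoal]
    · push_neg at h2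
      have hAs : s < A * (s - 1) := by nlinarith [h2, ha]
      have h3 : A * (s - 1) ≤ A * (s * L) :=
        mul_le_mul_of_nonneg_left hLlb (le_of_lt hApos)
      have h4 : s < A * s * L := by nlinarith
      have h5 : 1 ≤ A * L := by nlinarith [h4, hspos]
      nlinarith [hbA, h5]
  · -- case `N < u' * V`
    push_neg at hc
    have hu'1 : 1 ≤ u' := by
      rcases Nat.eq_zero_or_pos u' with h | h
      · subst h; simp at hc
      · exact h
    have hbpos : (0:ℝ) < (u':ℝ) := by exact_mod_cast hu'1
    set ν : ℝ := (N:ℝ) with hν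
    set v : ℝ := (V:ℝ) with hv
    set a : ℝ := (u:ℝ) with ha'
    set b : ℝ := (u':ℝ) with hb'
    set A : ℝ := ν / v with hA
    set s : ℝ := a * v / ν with hs
    set s' : ℝ := b * v / ν with hs'
    set L : ℝ := Real.log s with hLdef
    set L' : ℝ := Real.log s' with hL'def
    clear_value ν v a b A s s' L L'
    have hApos : 0 < A := by rw [hA]; positivity
    have hs1 : 1 < s := by rw [hs, lt_div_iff₀ hνpos]; linarith
    have hsν : s * ν = a * v := by rw [hs]; exact div_mul_cancel₀ _ (ne_of_gt hνpos)
    have ha : a = s * A := by rw [hs, hA]; field_simp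
    have hb : b ≤ a - s := by nlinarith [hsν, hrecR, hνpos]
    show 1 + A * (L' + 1) ≤ A * (L + 1)
    have hL2 : L = Real.log a + Real.log v - Real.log ν := by
      rw [hLdef, hs, Real.log_div (by positivity) (ne_of_gt hνpos),
        Real.log_mul (ne_of_gt hapos) (ne_of_gt hvpos)]
    have hL'2 : L' = Real.log b + Real.log v - Real.log ν := by
      rw [hL'def, hs', Real.log_div (by positivity) (ne_of_gt hνpos),
        Real.log_mul (ne_of_gt hbpos) (ne_of_gt hvpos)]
    have hlogba : Real.log b - Real.log a ≤ b / a - 1 := by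
      have h := Real.log_le_sub_one_of_pos (show (0:ℝ) < b / a by positivity)
      rwa [Real.log_div (ne_of_gt hbpos) (ne_of_gt hapos)] at h
    have hba : b / a ≤ 1 - 1 / A := by
      rw [div_le_iff₀ hapos]
      have h1 : a / A = s := by rw [ha]; field_simp
      have h2 : (1 - 1 / A) * a = a - a / A := by ring
      rw [h2, h1]; linarith
    have h1A : 1 / A ≤ Real.log a - Real.log b := by linarith
    have hfin : 1 ≤ A * (Real.log a - Real.log b) := by
      have h := mul_le_mul_of_nonneg_left h1A (le_of_lt hApos)
      rw [mul_one_div, div_self (ne_of_gt hApos)] at h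
      linarith
    rw [hL2, hL'2]
    nlinarith [hfin]

lemma SLF_at_top (N V : ℕ) (hN : 1 ≤ N) (hV : 1 ≤ V) :
    SLF N V N = ((N:ℝ)/(V:ℝ)) * (Real.log (V:ℝ) + 1) := by
  rcases eq_or_lt_of_le hV with h1 | h2
  · rw [SLF, if_pos (by rw [← h1, mul_one]), ← h1]
    simp
  · have hle : ¬ (N * V ≤ N) := by nlinarith
    rw [SLF, if_neg hle]
    have hNpos : (0:ℝ) < (N:ℝ) := by exact_mod_cast hN
    have h : (N:ℝ) * (V:ℝ) / (N:ℝ) = (V:ℝ) := by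
      rw [mul_comm, mul_div_assoc, div_self (ne_of_gt hNpos), mul_one]
    rw [h]

lemma greedy_cover (X : Type) [Fintype X] [DecidableEq X] (B : X → Finset X)
    (hself : ∀ x, x ∈ B x) (hsymm : ∀ x c, x ∈ B c ↔ c ∈ B x)
    (V : ℕ) (hcard : ∀ c, (B c).card = V) :
    ∀ (k : ℕ) (U : Finset X), U.card ≤ k →
      ∃ C : Finset X, (∀ x ∈ U, ∃ c ∈ C, x ∈ B c) ∧
        (C.card : ℝ) ≤ SLF (Fintype.card X) V U.card := by
  intro k
  induction k with
  | zero =>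
    intro U hU
    have hU0 : U = ∅ := Finset.card_eq_zero.mp (Nat.le_zero.mp hU)
    refine ⟨∅, ?_, ?_⟩
    · intro x hx; rw [hU0] at hx; exact absurd hx (Finset.notMem_empty x)
    · rw [hU0]; simp [SLF]
  | succ k ih =>
    intro U hU
    by_cases hk : U.card ≤ k
    · exact ih U hk
    have hUpos : 0 < U.card := by omega
    obtain ⟨x0, hx0⟩ := Finset.card_pos.mp hUpos
    set N := Fintype.card X with hNdef
    have hVpos : 0 < V := by
      rw [← hcard x0]; exact Finset.card_pos.mpr ⟨x0, hself x0⟩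
    have hNpos : 0 < N := Fintype.card_pos_iff.mpr ⟨x0⟩
    have hVN : V ≤ N := by rw [← hcard x0, hNdef]; exact Finset.card_le_univ _
    by_cases hsmall : U.card * V ≤ N
    · refine ⟨U, fun x hx => ⟨x, hx, hself x⟩, ?_⟩
      rw [SLF, if_pos hsmall]
    · have hsum : ∑ c : X, (U.filter (fun x => x ∈ B c)).card = U.card * V := by
        calc ∑ c : X, (U.filter (fun x => x ∈ B c)).card
            = ∑ c : X, ∑ x ∈ U, if x ∈ B c then 1 else 0 := by
              refine Finset.sum_congr rfl fun c _ => Finset.card_filter _ _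
          _ = ∑ x ∈ U, ∑ c : X, if x ∈ B c then 1 else 0 := Finset.sum_comm
          _ = ∑ x ∈ U, (B x).card := by
              refine Finset.sum_congr rfl fun x _ => ?_
              rw [← Finset.card_filter]
              congr 1
              ext c
              simp [hsymm x c]
          _ = ∑ _x ∈ U, V := by
              exact Finset.sum_congr rfl fun x _ => hcard x
          _ = U.card * V := by rw [Finset.sum_const, smul_eq_mul]
      have hex : ∃ c : X, U.card * V ≤ N * (U.filter (fun x => x ∈ B c)).card := by
        have e1 : ∑ _c : X, U.card * V = N * (U.card * V) := by
          rw [Finset.sum_const, Finset.card_univ, ← hNdef, smul_eq_mul]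
        have e2 : ∑ c : X, N * (U.filter (fun x => x ∈ B c)).card = N * (U.card * V) := by
          rw [← Finset.mul_sum, hsum]
        have h1 : ∑ _c : X, U.card * V ≤
            ∑ c : X, N * (U.filter (fun x => x ∈ B c)).card := by rw [e1, e2]
        obtain ⟨c, -, hc⟩ := Finset.exists_le_of_sum_le ⟨x0, Finset.mem_univ x0⟩ h1
        exact ⟨c, hc⟩
      obtain ⟨c, hc⟩ := hex
      set W := U.filter (fun x => x ∈ B c) with hWdef
      set U' := U.filter (fun x => ¬ x ∈ B c) with hU'def
      have hsplit : W.card + U'.card = U.card :=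
        Finset.card_filter_add_card_filter_not _
      have hWpos : 0 < W.card := by
        rcases Nat.eq_zero_or_pos W.card with h0 | h
        · rw [h0, Nat.mul_zero] at hc
          have : 0 < U.card * V := Nat.mul_pos hUpos hVpos
          omega
        · exact h
      obtain ⟨C', hC'cov, hC'card⟩ := ih U' (by omega)
      refine ⟨insert c C', ?_, ?_⟩
      · intro x hx
        by_cases hxB : x ∈ B c
        · exact ⟨c, Finset.mem_insert_self c C', hxB⟩
        · obtain ⟨c', hc', hx'⟩ := hC'cov x (Finset.mem_filter.mpr ⟨hx, hxB⟩)
          exact ⟨c', Finset.mem_insert_of_mem hc', hx'⟩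
      · have hins : (insert c C').card ≤ C'.card + 1 := Finset.card_insert_le c C'
        have hrec : N * U'.card + U.card * V ≤ N * U.card := by
          have h2 : N * W.card + N * U'.card = N * U.card := by
            rw [← Nat.mul_add, hsplit]
          omega
        have hstep : 1 + SLF N V U'.card ≤ SLF N V U.card :=
          SLF_step N V U.card U'.card hNpos hVpos hVN (Finset.card_le_univ U)
            (Nat.lt_of_not_le hsmall) hrec
        have hcast : ((insert c C').card : ℝ) ≤ (C'.card : ℝ) + 1 := by exact_mod_cast hins
        linarith

/-- The Johnston–Stein–Lovász upper bound:
`K_R(q^m,n,ρ) ≤ (q^{mn}/V_ρ(q^m,n)) (1 + ln V_ρ(q^m,n))`. -/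
theorem stmt12 (q m n ρ : ℕ) (Fq Fqm : Type) [Field Fq] [Fintype Fq] [Field Fqm] [Fintype Fqm]
    [Algebra Fq Fqm] (hq : Fintype.card Fq = q) (hm : Module.finrank Fq Fqm = m)
    (hnm : n ≤ m) (hρ : ρ < n) :
    (coveringNumber Fq Fqm n ρ : ℝ)
      ≤ (q : ℝ) ^ (m * n) / (ballVol Fq Fqm n ρ : ℝ)
          * (1 + Real.log (ballVol Fq Fqm n ρ)) := by
  classical
  have hFqm : Fintype.card Fqm = q ^ m := by
    rw [Module.card_eq_pow_finrank (K := Fq) (V := Fqm), hq, hm]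
  set B : (Fin n → Fqm) → Finset (Fin n → Fqm) :=
    fun c => Finset.univ.filter (fun y => rankWeight Fq (y - c) ≤ ρ) with hBdef
  have hmem : ∀ x c : Fin n → Fqm, x ∈ B c ↔ rankWeight Fq (x - c) ≤ ρ := by
    intro x c; simp [hBdef]
  have hself : ∀ x : Fin n → Fqm, x ∈ B x := by
    intro x
    rw [hmem, sub_self, rankWeight_zero]
    exact Nat.zero_le ρ
  have hrw : ∀ x c : Fin n → Fqm, rankWeight Fq (x - c) = rankWeight Fq (c - x) := by
    intro x c
    rw [show x - c = -(c - x) from (neg_sub c x).symm, rankWeight_neg]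
  have hsymm : ∀ x c : Fin n → Fqm, x ∈ B c ↔ c ∈ B x := by
    intro x c; rw [hmem, hmem, hrw]
  set Vb := (B (0 : Fin n → Fqm)).card with hVdef
  have hcard : ∀ c, (B c).card = Vb := by
    intro c
    rw [hVdef]
    apply Finset.card_bij' (fun y _ => y - c) (fun y _ => y + c)
    · intro y hy
      rw [hmem] at hy ⊢
      rwa [sub_zero]
    · intro y hy
      rw [hmem] at hy ⊢
      rw [sub_zero] at hy
      rwa [add_sub_cancel_right]
    · intro y _; exact sub_add_cancel y c
    · intro y _; exact add_sub_cancel_right y c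
  have hball : ballVol Fq Fqm n ρ = Vb := by
    rw [ballVol, Nat.card_coe_set_eq, Set.ncard_eq_toFinset_card', hVdef]
    congr 1
    ext y
    simp [rankBall, hBdef, Set.mem_toFinset]
    simp only [Set.toFinset, Finset.mem_map, Finset.mem_univ]
    exact ⟨fun ⟨z, _, hz⟩ => hz ▸ by simpa using z.2, fun h => ⟨⟨y, by simpa using h⟩, Fintype.complete (self := _) _, rfl⟩⟩
  have hVpos : 0 < Vb := by
    rw [hVdef]; exact Finset.card_pos.mpr ⟨0, hself 0⟩
  have hNcard : Fintype.card (Fin n → Fqm) = q ^ (m * n) := by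
    rw [Fintype.card_fun, hFqm, Fintype.card_fin, ← pow_mul]
  have hNpos : 0 < Fintype.card (Fin n → Fqm) := Fintype.card_pos
  obtain ⟨C, hCcov, hCcard⟩ := greedy_cover (Fin n → Fqm) B hself hsymm Vb hcard
    (Fintype.card (Fin n → Fqm)) Finset.univ (le_of_eq (Finset.card_univ))
  have hcov' : ∀ x : Fin n → Fqm, ∃ c ∈ C, rankWeight Fq (x - c) ≤ ρ := by
    intro x
    obtain ⟨c, hcC, hx⟩ := hCcov x (Finset.mem_univ x)
    exact ⟨c, hcC, (hmem x c).mp hx⟩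
  have hCne : C.Nonempty := by
    obtain ⟨c, hcC, -⟩ := hcov' 0
    exact ⟨c, hcC⟩
  have hK : coveringNumber Fq Fqm n ρ ≤ C.card := Nat.sInf_le ⟨C, hCne, hcov', rfl⟩
  rw [Finset.card_univ] at hCcard
  rw [SLF_at_top _ _ hNpos hVpos] at hCcard
  have hKR : (coveringNumber Fq Fqm n ρ : ℝ) ≤ (C.card : ℝ) := by exact_mod_cast hK
  rw [hball]
  calc (coveringNumber Fq Fqm n ρ : ℝ) ≤ (C.card : ℝ) := hKR
    _ ≤ ((Fintype.card (Fin n → Fqm) : ℝ) / (Vb : ℝ)) * (Real.log (Vb : ℝ) + 1) := hCcard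
    _ = (q : ℝ) ^ (m * n) / (Vb : ℝ) * (1 + Real.log (Vb : ℝ)) := by
        rw [hNcard]; push_cast; ring

end
end

section
/- Let C be an (n,k) linear code over GF(q^m) with n ≤ m. Then C has minimum rank distance n−k+1 (i.e., C is a maximum rank distance code) if and only if C ⊕ V = GF(q^m)^n for every elementary linear subspace V ∈ E_{n−k}(q^m,n). -/
open scoped BigOperators

noncomputable section

section AuxMRD

variable {Fq Fqm : Type} [Field Fq] [Field Fqm] [Algebra Fq Fqm] {n : ℕ}

/-- Rank weight is at most the size of the support. -/
lemma rankWeight_le_card_support (c : Fin n → Fqm) (A : Finset (Fin n))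
    (hA : ∀ i, i ∉ A → c i = 0) : rankWeight Fq c ≤ A.card := by
  classical
  have h1 : Set.range c ⊆ insert 0 ↑(A.image c) := by
    rintro x ⟨i, rfl⟩
    by_cases hi : i ∈ A
    · exact Set.mem_insert_iff.mpr (Or.inr (by simpa using ⟨i, hi, rfl⟩))
    · simp [hA i hi]
  have h2 : Submodule.span Fq (Set.range c) ≤ Submodule.span Fq ↑(A.image c) :=
    (Submodule.span_mono h1).trans (le_of_eq Submodule.span_insert_zero)
  haveI := FiniteDimensional.span_of_finite Fq (Finset.finite_toSet (A.image c))
  have h3 := Submodule.finrank_mono (R := Fq) h2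
  have h4 := finrank_span_finset_le_card (R := Fq) (A.image c)
  rw [Set.finrank] at h4
  exact h3.trans (h4.trans Finset.card_image_le)

/-- A vector in an ELS has rank weight at most the dimension of the ELS. -/
lemma rankWeight_le_of_mem_els (V : Submodule Fqm (Fin n → Fqm)) (hV : IsELS Fq V)
    {c : Fin n → Fqm} (hc : c ∈ V) : rankWeight Fq c ≤ Module.finrank Fqm V := by
  classical
  obtain ⟨S, hS, rfl⟩ := hV
  obtain ⟨b, hbS, hspan, hli⟩ := exists_linearIndependent Fqm S
  have hbfin : b.Finite := hli.setFinite
  haveI := hbfin.fintype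
  have hcard : Module.finrank Fqm (Submodule.span Fqm S) = b.toFinset.card := by
    rw [← hspan]; exact finrank_span_set_eq_card hli
  have hc' : c ∈ Submodule.span Fqm ↑b.toFinset := by
    rw [Set.coe_toFinset, hspan]; exact hc
  obtain ⟨f, -, hf⟩ := Submodule.mem_span_finset.mp hc'
  have hrange : ∀ i, c i ∈ Submodule.span Fq ↑(b.toFinset.image f) := by
    intro i
    have : c i = ∑ x ∈ b.toFinset, (f x • x) i := by
      conv_lhs => rw [← hf]
      simp
    rw [this]
    apply Submodule.sum_mem
    intro x hx
    obtain ⟨a, ha⟩ := hS x (hbS (by simpa using hx)) i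
    have hxi : (f x • x) i = a • f x := by
      simp only [Pi.smul_apply, smul_eq_mul, Algebra.smul_def, ← ha]
      ring
    rw [hxi]
    exact Submodule.smul_mem _ _
      (Submodule.subset_span (by simpa using Finset.mem_image_of_mem f hx))
  haveI := FiniteDimensional.span_of_finite Fq (Finset.finite_toSet (b.toFinset.image f))
  have h2 : Submodule.span Fq (Set.range c) ≤ Submodule.span Fq ↑(b.toFinset.image f) := by
    rw [Submodule.span_le]; rintro x ⟨i, rfl⟩; exact hrange i
  have h3 := Submodule.finrank_mono (R := Fq) h2
  have h4 := finrank_span_finset_le_card (R := Fq) (b.toFinset.image f)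
  rw [Set.finrank] at h4
  have h5 : (b.toFinset.image f).card ≤ b.toFinset.card := Finset.card_image_le
  rw [hcard]
  exact h3.trans (h4.trans h5)

/-- Singleton-type bound: a `k`-dimensional code contains a nonzero codeword of
rank weight at most `n - k + 1`. -/
lemma exists_low_rank {k : ℕ} (hk : 0 < k) (hkn : k ≤ n)
    (C : Submodule Fqm (Fin n → Fqm)) (hC : Module.finrank Fqm C = k) :
    ∃ c ∈ C, c ≠ 0 ∧ rankWeight Fq c ≤ n - k + 1 := by
  classical
  set φ : C →ₗ[Fqm] (Fin (k - 1) → Fqm) :=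
    (LinearMap.funLeft Fqm Fqm (Fin.castLE (by omega))).comp C.subtype with hφ
  have hker : LinearMap.ker φ ≠ ⊥ := by
    intro h
    have hinj : Function.Injective φ := LinearMap.ker_eq_bot.mp h
    have := LinearMap.finrank_le_finrank_of_injective hinj
    rw [hC, Module.finrank_fin_fun] at this
    omega
  obtain ⟨x, hxker, hx0⟩ := Submodule.exists_mem_ne_zero_of_ne_bot hker
  have hxcoord : ∀ i : Fin (k - 1), (x : Fin n → Fqm) (Fin.castLE (by omega) i) = 0 := by
    intro i
    have := LinearMap.mem_ker.mp hxker
    have h2 : φ x i = 0 := by rw [this]; rfl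
    simpa [hφ, LinearMap.funLeft] using h2
  refine ⟨(x : Fin n → Fqm), x.2, fun h => hx0 (Subtype.ext h), ?_⟩
  set A : Finset (Fin n) := Finset.univ.filter (fun i : Fin n => k - 1 ≤ (i : ℕ)) with hA
  have hvanish : ∀ i, i ∉ A → (x : Fin n → Fqm) i = 0 := by
    intro i hi
    simp only [hA, Finset.mem_filter, Finset.mem_univ, true_and, not_le] at hi
    have : (Fin.castLE (show k - 1 ≤ n by omega) ⟨(i : ℕ), hi⟩) = i := by
      apply Fin.ext; rfl
    rw [← this]; exact hxcoord _
  have hcard : A.card ≤ n - k + 1 := by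
    have hsub : A ⊆ Finset.univ.image
        (fun j : Fin (n - (k - 1)) => (⟨k - 1 + (j : ℕ), by omega⟩ : Fin n)) := by
      intro i hi
      simp only [hA, Finset.mem_filter, Finset.mem_univ, true_and] at hi
      refine Finset.mem_image.mpr ⟨⟨(i : ℕ) - (k - 1), by omega⟩, Finset.mem_univ _, ?_⟩
      apply Fin.ext; simp; omega
    calc A.card ≤ _ := Finset.card_le_card hsub
      _ ≤ Fintype.card (Fin (n - (k - 1))) := Finset.card_image_le.trans (by simp)
      _ ≤ n - k + 1 := by simp; omega
  exact (rankWeight_le_card_support _ A hvanish).trans hcard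

lemma span_insert_finrank_le {K M : Type} [Field K] [AddCommGroup M] [Module K M]
    [FiniteDimensional K M] (S : Set M) (x : M) :
    Module.finrank K (Submodule.span K (insert x S)) ≤
      Module.finrank K (Submodule.span K S) + 1 := by
  rw [Submodule.span_insert]
  have hsup := Submodule.finrank_sup_add_finrank_inf_eq (K ∙ x) (Submodule.span K S)
  have h1 : Module.finrank K (K ∙ x) ≤ 1 := by
    have h2 := finrank_span_le_card (R := K) ({x} : Set M)
    simpa using h2
  omega

lemma nat_ivt (f : ℕ → ℕ) (hstep : ∀ j, f (j + 1) ≤ f j + 1) :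
    ∀ N t, f 0 ≤ t → t ≤ f N → ∃ j, f j = t := by
  intro N
  induction N with
  | zero => intro t h0 hN; exact ⟨0, by omega⟩
  | succ N ih =>
    intro t h0 hN
    by_cases h : t ≤ f N
    · exact ih t h0 h
    · exact ⟨N + 1, by have := hstep N; omega⟩

lemma ivt_span {K M : Type} [Field K] [AddCommGroup M] [Module K M]
    [FiniteDimensional K M] (S : Set M) (g : ℕ → M) (N t : ℕ)
    (h0 : Module.finrank K (Submodule.span K S) ≤ t)
    (htop : Submodule.span K (S ∪ g '' {a : ℕ | a < N}) = ⊤)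
    (ht : t ≤ Module.finrank K M) :
    ∃ j, Module.finrank K (Submodule.span K (S ∪ g '' {a : ℕ | a < j})) = t := by
  have hstep : ∀ j, Module.finrank K (Submodule.span K (S ∪ g '' {a : ℕ | a < j + 1})) ≤
      Module.finrank K (Submodule.span K (S ∪ g '' {a : ℕ | a < j})) + 1 := by
    intro j
    have hset : (S ∪ g '' {a : ℕ | a < j + 1}) = insert (g j) (S ∪ g '' {a : ℕ | a < j}) := by
      have h1 : {a : ℕ | a < j + 1} = insert j {a : ℕ | a < j} := by
        ext a; simp; omega
      rw [h1, Set.image_insert_eq, Set.union_insert]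
    rw [hset]
    exact span_insert_finrank_le _ _
  have hz : Module.finrank K (Submodule.span K (S ∪ g '' {a : ℕ | a < 0})) ≤ t := by
    have h1 : {a : ℕ | a < 0} = (∅ : Set ℕ) := by ext a; simp
    rw [h1, Set.image_empty, Set.union_empty]
    exact h0
  have hNt : t ≤ Module.finrank K (Submodule.span K (S ∪ g '' {a : ℕ | a < N})) := by
    rw [htop, finrank_top]
    exact ht
  exact nat_ivt (fun j => Module.finrank K (Submodule.span K (S ∪ g '' {a : ℕ | a < j})))
    hstep N t hz hNt

/-- A vector of rank weight at most `t ≤ n` lies in some ELS of dimension exactly `t`. -/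
lemma exists_els_of_rankWeight_le {c : Fin n → Fqm} {t : ℕ}
    (h : rankWeight Fq c ≤ t) (ht : t ≤ n) :
    ∃ V : Submodule Fqm (Fin n → Fqm),
      IsELS Fq V ∧ Module.finrank Fqm V = t ∧ c ∈ V := by
  classical
  obtain ⟨b, hbr, hspan, hli⟩ := exists_linearIndependent Fq (Set.range c)
  have hbfin : b.Finite := (Set.finite_range c).subset hbr
  haveI := hbfin.fintype
  have hcardb : b.toFinset.card ≤ t := by
    have hc1 := finrank_span_set_eq_card hli
    rw [hspan] at hc1
    have h' : Module.finrank Fq (Submodule.span Fq (Set.range c)) ≤ t := h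
    omega
  have hcmem : ∀ i, c i ∈ Submodule.span Fq (↑b.toFinset : Set Fqm) := by
    intro i
    rw [Set.coe_toFinset, hspan]
    exact Submodule.subset_span ⟨i, rfl⟩
  choose g _ hg using fun i => Submodule.mem_span_finset.mp (hcmem i)
  let vb : Fqm → (Fin n → Fqm) := fun β i => algebraMap Fq Fqm (g i β)
  have hcS0 : c ∈ Submodule.span Fqm (↑(b.toFinset.image vb) : Set (Fin n → Fqm)) := by
    have hdecomp : c = ∑ β ∈ b.toFinset, β • vb β := by
      funext i
      rw [Finset.sum_apply]
      have heq : ∀ β ∈ b.toFinset, (β • vb β) i = g i β • β := by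
        intro β _
        simp only [Pi.smul_apply, smul_eq_mul, vb, Algebra.smul_def]
        ring
      rw [Finset.sum_congr rfl heq, hg i]
    rw [hdecomp]
    exact Submodule.sum_mem _ fun β hβ => Submodule.smul_mem _ _
      (Submodule.subset_span (by simpa using Finset.mem_image_of_mem vb hβ))
  let E : ℕ → (Fin n → Fqm) := fun a j => if (j : ℕ) = a then 1 else 0
  have h0 : Module.finrank Fqm
      (Submodule.span Fqm (↑(b.toFinset.image vb) : Set (Fin n → Fqm))) ≤ t := by
    have h4 := finrank_span_finset_le_card (R := Fqm) (b.toFinset.image vb)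
    rw [Set.finrank] at h4
    exact h4.trans (Finset.card_image_le.trans hcardb)
  have htop : Submodule.span Fqm
      ((↑(b.toFinset.image vb) : Set (Fin n → Fqm)) ∪ E '' {a : ℕ | a < n}) = ⊤ := by
    rw [eq_top_iff]
    intro x _
    have hx : x = ∑ i : Fin n, x i • E (i : ℕ) := by
      have h1 := pi_eq_sum_univ x
      have h2 : ∑ i : Fin n, x i • (fun j => if i = j then (1 : Fqm) else 0) =
          ∑ i : Fin n, x i • E (i : ℕ) := by
        apply Finset.sum_congr rfl
        intro i _
        congr 1
        funext j
        simp [E, Fin.val_eq_val, eq_comm]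
      exact h1.trans h2
    rw [hx]
    exact Submodule.sum_mem _ fun i _ => Submodule.smul_mem _ _
      (Submodule.subset_span (Or.inr ⟨(i : ℕ), i.isLt, rfl⟩))
  have htn : t ≤ Module.finrank Fqm (Fin n → Fqm) := by
    rw [Module.finrank_fin_fun]; exact ht
  obtain ⟨j, hj⟩ :=
    ivt_span (↑(b.toFinset.image vb) : Set (Fin n → Fqm)) E n t h0 htop htn
  refine ⟨Submodule.span Fqm
      ((↑(b.toFinset.image vb) : Set (Fin n → Fqm)) ∪ E '' {a : ℕ | a < j}), ?_, hj, ?_⟩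
  · refine ⟨(↑(b.toFinset.image vb) : Set (Fin n → Fqm)) ∪ E '' {a : ℕ | a < j}, ?_, rfl⟩
    rintro s (hs | ⟨a, _, rfl⟩) i
    · obtain ⟨β, _, rfl⟩ : ∃ β ∈ b, vb β = s := by simpa using hs
      exact ⟨g i β, rfl⟩
    · by_cases hia : (i : ℕ) = a
      · exact ⟨1, by simp [E, hia]⟩
      · exact ⟨0, by simp [E, hia]⟩
  · exact Submodule.span_mono Set.subset_union_left hcS0


/-- Disjoint subspaces whose dimensions add up to `n` are complementary. -/
lemma isCompl_of_inf_eq_bot {C V : Submodule Fqm (Fin n → Fqm)}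
    (hd : C ⊓ V = ⊥)
    (hdim : Module.finrank Fqm C + Module.finrank Fqm V = n) : IsCompl C V := by
  have htop : C ⊔ V = ⊤ := by
    apply Submodule.eq_top_of_finrank_eq
    have h := Submodule.finrank_sup_add_finrank_inf_eq C V
    rw [hd] at h
    simp only [finrank_bot, add_zero] at h
    rw [h, hdim, Module.finrank_fin_fun]
  exact ⟨disjoint_iff.mpr hd, codisjoint_iff.mpr htop⟩

end AuxMRD

/-- Characterization of MRD codes: an `(n,k)` linear code over `GF(q^m)` (`n ≤ m`) has
minimum rank distance `n - k + 1` iff `C ⊕ V = GF(q^m)^n` for every elementary linear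
subspace `V` of dimension `n - k`. -/
theorem stmt13 (q m n k : ℕ) (Fq Fqm : Type) [Field Fq] [Fintype Fq] [Field Fqm] [Fintype Fqm]
    [Algebra Fq Fqm] (hq : Fintype.card Fq = q) (hm : Module.finrank Fq Fqm = m)
    (hnm : n ≤ m) (hk : 0 < k) (hkn : k ≤ n)
    (C : Submodule Fqm (Fin n → Fqm)) (hC : Module.finrank Fqm C = k) :
    sInf {r : ℕ | ∃ c ∈ C, c ≠ 0 ∧ rankWeight Fq c = r} = n - k + 1 ↔
      ∀ V : Submodule Fqm (Fin n → Fqm),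
        IsELS Fq V → Module.finrank Fqm V = n - k → IsCompl C V := by
  classical
  constructor
  · intro hmin V hV hVdim
    have hd : C ⊓ V = ⊥ := by
      rw [Submodule.eq_bot_iff]
      intro x hx
      by_contra hx0
      have h1 : rankWeight Fq x ∈ {r : ℕ | ∃ c ∈ C, c ≠ 0 ∧ rankWeight Fq c = r} :=
        ⟨x, (Submodule.mem_inf.mp hx).1, hx0, rfl⟩
      have h2 := Nat.sInf_le h1
      rw [hmin] at h2
      have h3 : rankWeight Fq x ≤ n - k := by
        have := rankWeight_le_of_mem_els V hV (Submodule.mem_inf.mp hx).2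
        omega
      omega
    exact isCompl_of_inf_eq_bot hd (by rw [hC, hVdim]; omega)
  · intro hcompl
    have hlb : ∀ r ∈ {r : ℕ | ∃ c ∈ C, c ≠ 0 ∧ rankWeight Fq c = r}, n - k + 1 ≤ r := by
      rintro r ⟨c, hcC, hc0, rfl⟩
      by_contra hlt
      push_neg at hlt
      have hle : rankWeight Fq c ≤ n - k := by omega
      obtain ⟨V, hV, hVdim, hcV⟩ := exists_els_of_rankWeight_le hle (by omega)
      have hdisj := (hcompl V hV hVdim).disjoint
      have hmem : c ∈ C ⊓ V := Submodule.mem_inf.mpr ⟨hcC, hcV⟩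
      rw [disjoint_iff.mp hdisj, Submodule.mem_bot] at hmem
      exact hc0 hmem
    obtain ⟨c, hcC, hc0, hcle⟩ := exists_low_rank (Fq := Fq) hk hkn C hC
    have hceq : rankWeight Fq c = n - k + 1 :=
      le_antisymm hcle (hlb _ ⟨c, hcC, hc0, rfl⟩)
    have hmem : n - k + 1 ∈ {r : ℕ | ∃ c ∈ C, c ≠ 0 ∧ rankWeight Fq c = r} :=
      ⟨c, hcC, hc0, hceq⟩
    exact le_antisymm (Nat.sInf_le hmem) (le_csInf ⟨_, hmem⟩ hlb)

end
end

section
/- An (n,k) linear code over GF(q^m) (n ≤ m) with rank covering radius ρ, 0 < ρ < n, satisfies ⌊n − ρ − (ρ(n−ρ) + σ(q))/m⌋ + 1 ≤ k ≤ n − ρ, where σ(q) = (1/ln q)·Σ_{k=1}^∞ 1/(k(q^k−1)). -/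
open scoped BigOperators

noncomputable section

namespace Stmt14Aux

lemma sigma_bound (q : ℕ) (hq : 2 ≤ q) (ρ : ℕ) :
    ∑ j ∈ Finset.range ρ, -Real.log (1 - ((q : ℝ))⁻¹ ^ (j + 1)) < Real.log q * sigmaQ q := by
  have hq1 : (1 : ℝ) < (q : ℝ) := by exact_mod_cast hq
  have hq0 : (0 : ℝ) < (q : ℝ) := lt_trans one_pos hq1
  set r : ℝ := (q : ℝ)⁻¹ with hrdef
  have hr0 : 0 < r := inv_pos.2 hq0
  have hr1 : r < 1 := by
    rw [hrdef, inv_lt_one_iff₀]; right; exact hq1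
  set g : ℕ × ℕ → ℝ := fun p => r ^ ((p.1 + 1) * (p.2 + 1)) / (p.2 + 1) with hgdef
  have hg0 : ∀ p : ℕ × ℕ, 0 ≤ g p := fun p => by
    apply div_nonneg (pow_nonneg hr0.le _); positivity
  have hrpow1 : ∀ j : ℕ, r ^ (j + 1) < 1 := fun j =>
    pow_lt_one₀ hr0.le hr1 (Nat.succ_ne_zero j)
  have hrow : ∀ j : ℕ, HasSum (fun k => g (j, k)) (-Real.log (1 - r ^ (j + 1))) := by
    intro j
    have habs : |r ^ (j + 1)| < 1 := by
      rw [abs_of_pos (pow_pos hr0 _)]; exact hrpow1 j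
    have h := Real.hasSum_pow_div_log_of_abs_lt_one habs
    have hfun : (fun k : ℕ => (r ^ (j + 1)) ^ (k + 1) / (k + 1)) = fun k => g (j, k) := by
      funext k
      show (r ^ (j + 1)) ^ (k + 1) / ((k : ℝ) + 1) = r ^ ((j + 1) * (k + 1)) / ((k : ℝ) + 1)
      rw [← pow_mul]
    rwa [hfun] at h
  have hcol : ∀ k : ℕ, HasSum (fun j => g (j, k))
      (1 / (((k : ℝ) + 1) * ((q : ℝ) ^ (k + 1) - 1))) := by
    intro k
    have h0 : 0 ≤ r ^ (k + 1) := pow_nonneg hr0.le _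
    have hgeo := (hasSum_geometric_of_lt_one h0 (hrpow1 k)).mul_left (r ^ (k + 1))
    have h := hgeo.div_const ((k : ℝ) + 1)
    have hfun : (fun j : ℕ => r ^ (k + 1) * (r ^ (k + 1)) ^ j / ((k : ℝ) + 1)) =
        fun j => g (j, k) := by
      funext j
      show r ^ (k + 1) * (r ^ (k + 1)) ^ j / ((k : ℝ) + 1) =
        r ^ ((j + 1) * (k + 1)) / ((k : ℝ) + 1)
      rw [show (j + 1) * (k + 1) = (k + 1) * (j + 1) by ring, pow_mul]
      ring
    have hqk : (1 : ℝ) < (q : ℝ) ^ (k + 1) := one_lt_pow₀ hq1 (Nat.succ_ne_zero k)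
    have hne : (q : ℝ) ^ (k + 1) - 1 ≠ 0 := ne_of_gt (by linarith)
    have hqne : ((q : ℝ) ^ (k + 1)) ≠ 0 := by positivity
    have hval : r ^ (k + 1) * (1 - r ^ (k + 1))⁻¹ / ((k : ℝ) + 1) =
        1 / (((k : ℝ) + 1) * ((q : ℝ) ^ (k + 1) - 1)) := by
      rw [hrdef, inv_pow]
      rw [show (1 - ((q : ℝ) ^ (k + 1))⁻¹) = ((q : ℝ) ^ (k + 1) - 1) / (q : ℝ) ^ (k + 1) by
        field_simp]
      field_simp
    rw [hfun, hval] at h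
    exact h
  have hsum : Summable g := by
    have hs1 : Summable (fun p : ℕ × ℕ => r ^ p.1 * r ^ p.2) :=
      (summable_geometric_of_lt_one hr0.le hr1).mul_of_nonneg
        (summable_geometric_of_lt_one hr0.le hr1)
        (fun _ => pow_nonneg hr0.le _) (fun _ => pow_nonneg hr0.le _)
    refine Summable.of_nonneg_of_le hg0 (fun p => ?_) hs1
    have h1 : g p ≤ r ^ ((p.1 + 1) * (p.2 + 1)) := by
      apply div_le_self (pow_nonneg hr0.le _)
      have := Nat.cast_nonneg (α := ℝ) p.2
      linarith
    have h2 : r ^ ((p.1 + 1) * (p.2 + 1)) ≤ r ^ (p.1 + p.2) := by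
      apply pow_le_pow_of_le_one hr0.le hr1.le
      nlinarith [Nat.zero_le (p.1 * p.2)]
    calc g p ≤ r ^ ((p.1 + 1) * (p.2 + 1)) := h1
      _ ≤ r ^ (p.1 + p.2) := h2
      _ = r ^ p.1 * r ^ p.2 := pow_add r p.1 p.2
  have hrows : HasSum (fun j => -Real.log (1 - r ^ (j + 1))) (∑' p : ℕ × ℕ, g p) :=
    HasSum.prod_fiberwise hsum.hasSum hrow
  have hswap : Summable (fun p : ℕ × ℕ => g p.swap) := hsum.prod_symm
  have hcols : HasSum (fun k : ℕ => 1 / (((k : ℝ) + 1) * ((q : ℝ) ^ (k + 1) - 1)))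
      (∑' p : ℕ × ℕ, g p.swap) :=
    HasSum.prod_fiberwise hswap.hasSum (fun k : ℕ => hcol k)
  have hswapeq : (∑' p : ℕ × ℕ, g p.swap) = ∑' p : ℕ × ℕ, g p :=
    (Equiv.prodComm ℕ ℕ).tsum_eq g
  rw [hswapeq] at hcols
  have hT : (∑' k : ℕ, 1 / (((k : ℝ) + 1) * ((q : ℝ) ^ (k + 1) - 1))) = ∑' p : ℕ × ℕ, g p :=
    hcols.tsum_eq
  have hterm : ∀ j : ℕ, 0 < -Real.log (1 - r ^ (j + 1)) := by
    intro j
    have h1 : 0 < 1 - r ^ (j + 1) := by linarith [hrpow1 j]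
    have h2 : 1 - r ^ (j + 1) < 1 := by
      have := pow_pos hr0 (j + 1); linarith
    exact neg_pos.2 (Real.log_neg h1 h2)
  have hlt : ∑ j ∈ Finset.range ρ, -Real.log (1 - r ^ (j + 1)) <
      ∑ j ∈ Finset.range (ρ + 1), -Real.log (1 - r ^ (j + 1)) := by
    rw [Finset.sum_range_succ]
    exact lt_add_of_pos_right _ (hterm ρ)
  have hle : ∑ j ∈ Finset.range (ρ + 1), -Real.log (1 - r ^ (j + 1)) ≤ ∑' p : ℕ × ℕ, g p := by
    have := Summable.sum_le_tsum (Finset.range (ρ + 1)) (fun j _ => (hterm j).le) hrows.summable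
    rwa [hrows.tsum_eq] at this
  have hL : 0 < Real.log q := Real.log_pos hq1
  have : Real.log q * sigmaQ q = ∑' p : ℕ × ℕ, g p := by
    rw [sigmaQ, hT]
    field_simp
  rw [this]
  exact lt_of_lt_of_le hlt hle


open Module Submodule

variable {K V : Type} [Field K] [AddCommGroup V] [Module K V]

/-- Extend a subspace to one of any intermediate dimension. -/
lemma exists_superspace_aux [FiniteDimensional K V] (d : ℕ) :
    ∀ (W : Submodule K V) (r : ℕ), finrank K W + d = r → r ≤ finrank K V →
      ∃ U : Submodule K V, W ≤ U ∧ finrank K U = r := by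
  induction d with
  | zero => exact fun W r h _ => ⟨W, le_rfl, by omega⟩
  | succ d ih =>
    intro W r h hr
    have hWV : finrank K W < finrank K V := by omega
    have hWt : W ≠ ⊤ := by
      rintro rfl
      rw [finrank_top] at hWV; omega
    obtain ⟨v, hv⟩ : ∃ v, v ∉ W := by
      by_contra hc; push_neg at hc
      exact hWt (Submodule.eq_top_iff'.2 hc)
    have hv0 : v ≠ 0 := fun h => hv (h ▸ W.zero_mem)
    have hlt : W < W ⊔ K ∙ v := by
      refine lt_of_le_of_ne le_sup_left fun he => hv ?_
      have : v ∈ W ⊔ K ∙ v := Submodule.mem_sup_right (Submodule.mem_span_singleton_self v)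
      rwa [← he] at this
    have h1 : finrank K ↥(W ⊔ K ∙ v) ≤ finrank K W + 1 := by
      have h2 := Submodule.finrank_sup_add_finrank_inf_eq W (K ∙ v)
      rw [finrank_span_singleton hv0] at h2
      omega
    have h2 : finrank K W < finrank K ↥(W ⊔ K ∙ v) :=
      Submodule.finrank_lt_finrank_of_lt hlt
    obtain ⟨U, hU1, hU2⟩ := ih (W ⊔ K ∙ v) r (by omega) hr
    exact ⟨U, le_sup_left.trans hU1, hU2⟩

lemma exists_superspace [FiniteDimensional K V] (W : Submodule K V) (r : ℕ)
    (h1 : finrank K W ≤ r) (h2 : r ≤ finrank K V) :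
    ∃ U : Submodule K V, W ≤ U ∧ finrank K U = r := by
  exact exists_superspace_aux (r - finrank K W) W r (by omega) h2

variable [Fintype K] [Finite V]

/-- Counting: (#subspaces of dim ρ) * (# bases of a ρ-dim space) = # li ρ-tuples. -/
lemma card_subspaces_mul (ρ : ℕ) (hρ : ρ ≤ finrank K V) :
    Nat.card {U : Submodule K V // finrank K ↥U = ρ} *
      ∏ i : Fin ρ, (Fintype.card K ^ ρ - Fintype.card K ^ (i : ℕ)) =
      ∏ i : Fin ρ, (Fintype.card K ^ finrank K V - Fintype.card K ^ (i : ℕ)) := by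
  classical
  rw [← card_linearIndependent (K := K) (V := V) hρ]
  haveI : Finite (Submodule K V) :=
    Finite.of_injective (fun U : Submodule K V => (U : Set V)) SetLike.coe_injective
  letI : Fintype {s : Fin ρ → V // LinearIndependent K s} := Fintype.ofFinite _
  letI : Fintype {U : Submodule K V // finrank K ↥U = ρ} := Fintype.ofFinite _
  let π : {s : Fin ρ → V // LinearIndependent K s} →
      {U : Submodule K V // finrank K ↥U = ρ} := fun s =>
    ⟨Submodule.span K (Set.range s.1), by
      rw [finrank_span_eq_card s.2, Fintype.card_fin]⟩
  have hfib : ∀ U : {U : Submodule K V // finrank K ↥U = ρ},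
      Nat.card {s : {s : Fin ρ → V // LinearIndependent K s} // π s = U} =
      ∏ i : Fin ρ, (Fintype.card K ^ ρ - Fintype.card K ^ (i : ℕ)) := by
    intro U
    have e : {s : {s : Fin ρ → V // LinearIndependent K s} // π s = U} ≃
        {t : Fin ρ → ↥U.1 // LinearIndependent K t} :=
      { toFun := fun s =>
          ⟨fun i => ⟨s.1.1 i, by
            have h : Submodule.span K (Set.range s.1.1) = U.1 :=
              congrArg Subtype.val s.2
            exact h ▸ Submodule.subset_span (Set.mem_range_self i)⟩, by
            exact LinearIndependent.of_comp U.1.subtype s.1.2⟩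
        invFun := fun t =>
          ⟨⟨fun i => ↑(t.1 i), t.2.map' U.1.subtype (Submodule.ker_subtype U.1)⟩, by
            apply Subtype.ext
            have hli : LinearIndependent K (fun i => (↑(t.1 i) : V)) :=
              t.2.map' U.1.subtype (Submodule.ker_subtype U.1)
            have hle : Submodule.span K (Set.range fun i => (↑(t.1 i) : V)) ≤ U.1 :=
              Submodule.span_le.2 (by rintro _ ⟨i, rfl⟩; exact (t.1 i).2)
            refine Submodule.eq_of_le_of_finrank_le hle ?_
            rw [U.2, finrank_span_eq_card hli, Fintype.card_fin]⟩
        left_inv := fun s => Subtype.ext (Subtype.ext rfl)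
        right_inv := fun t => Subtype.ext (funext fun i => Subtype.ext rfl) }
    have hk : ρ ≤ finrank K ↥U.1 := le_of_eq U.2.symm
    rw [Nat.card_congr e, card_linearIndependent (K := K) (V := ↥U.1) hk]
    exact Finset.prod_congr rfl fun i _ => by rw [U.2]
  have hsig := Nat.card_congr (Equiv.sigmaFiberEquiv π)
  rw [Nat.card_eq_fintype_card, Nat.card_eq_fintype_card] at hsig
  rw [Nat.card_eq_fintype_card, Nat.card_eq_fintype_card, ← hsig, Fintype.card_sigma]
  have : ∀ U : {U : Submodule K V // finrank K ↥U = ρ},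
      Fintype.card {s // π s = U} =
        ∏ i : Fin ρ, (Fintype.card K ^ ρ - Fintype.card K ^ (i : ℕ)) := by
    intro U; rw [← Nat.card_eq_fintype_card]; exact hfib U
  rw [Finset.sum_congr rfl fun U _ => this U, Finset.sum_const, Finset.card_univ, smul_eq_mul]


end Stmt14Aux

open Module

/-- Bounds on the dimension of an `(n,k)` linear code over `GF(q^m)` (`n ≤ m`) with rank
covering radius `ρ`, `0 < ρ < n`:
`⌊n - ρ - (ρ(n-ρ) + σ(q))/m⌋ + 1 ≤ k ≤ n - ρ`. -/
theorem stmt14 (q m n k ρ : ℕ) (Fq Fqm : Type) [Field Fq] [Fintype Fq] [Field Fqm] [Fintype Fqm]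
    [Algebra Fq Fqm] (hq : Fintype.card Fq = q) (hm : Module.finrank Fq Fqm = m)
    (hnm : n ≤ m) (hρ1 : 0 < ρ) (hρ2 : ρ < n)
    (C : Submodule Fqm (Fin n → Fqm)) (hC : Module.finrank Fqm C = k)
    (hcov : ∀ x : Fin n → Fqm, ∃ c ∈ C, rankWeight Fq (x - c) ≤ ρ)
    (hmax : ∃ x : Fin n → Fqm, ∀ c ∈ C, ρ ≤ rankWeight Fq (x - c)) :
    ⌊(n : ℝ) - (ρ : ℝ) - ((ρ : ℝ) * ((n : ℝ) - (ρ : ℝ)) + sigmaQ q) / (m : ℝ)⌋ + 1 ≤ (k : ℤ) ∧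
    k ≤ n - ρ := by
  classical
  have hq2 : 2 ≤ q := hq ▸ Fintype.one_lt_card
  haveI : Module.Finite Fq Fqm := Module.finite_iff_finite.mpr inferInstance
  haveI : Module.Finite Fq (Fin n → Fqm) := Module.finite_iff_finite.mpr inferInstance
  -- k ≤ n
  have hkn : k ≤ n := by
    rw [← hC]
    have h := Submodule.finrank_le C
    rwa [Module.finrank_fintype_fun_eq_card, Fintype.card_fin] at h
  -- Part 2 : k + ρ ≤ n
  have hpart2 : k + ρ ≤ n := by
    by_contra hlt
    push_neg at hlt
    obtain ⟨x, hx⟩ := hmax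
    let b : Basis (Fin k) Fqm ↥C := Module.finBasisOfFinrankEq Fqm ↥C hC
    let cols : Fin n → (Fin k → Fqm) := fun i j => (b j : Fin n → Fqm) i
    obtain ⟨s, hs_sub, hs_span, hs_li⟩ := exists_linearIndependent Fqm (Set.range cols)
    have hs_fin : s.Finite := (Set.finite_range cols).subset hs_sub
    haveI : Fintype ↥s := hs_fin.fintype
    have hs_card : s.toFinset.card ≤ k := by
      have h1 := finrank_span_set_eq_card hs_li
      have h2 : Submodule.span Fqm s ≤ ⊤ := le_top
      have h3 := Submodule.finrank_le (Submodule.span Fqm s)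
      rw [h1, Module.finrank_fintype_fun_eq_card, Fintype.card_fin] at h3
      exact h3
    choose pick hpick using fun v : ↥s => hs_sub v.2
    let I : Finset (Fin n) := Finset.univ.image pick
    have hIcard : I.card ≤ k := by
      refine le_trans Finset.card_image_le ?_
      rw [Finset.card_univ]
      rw [← Set.toFinset_card]
      exact hs_card
    let Φ : ↥C →ₗ[Fqm] (↥I → Fqm) :=
      LinearMap.pi (fun i => (LinearMap.proj (i : Fin n)).comp C.subtype)
    have hinj : Function.Injective Φ := by
      rw [← LinearMap.ker_eq_bot, Submodule.eq_bot_iff]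
      intro c hc
      rw [LinearMap.mem_ker] at hc
      have hcoord : ∀ i : ↥I, (c : Fin n → Fqm) (i : Fin n) = 0 := fun i => congrFun hc i
      set a := b.repr c with ha
      let ℓ : (Fin k → Fqm) →ₗ[Fqm] Fqm := ∑ j : Fin k, a j • LinearMap.proj j
      have hcols_eq : ∀ i : Fin n, (c : Fin n → Fqm) i = ℓ (cols i) := by
        intro i
        have hre : (∑ j : Fin k, a j • b j : ↥C) = c := b.sum_repr c
        calc (c : Fin n → Fqm) i = ((∑ j : Fin k, a j • b j : ↥C) : Fin n → Fqm) i := by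
              rw [hre]
          _ = ∑ j : Fin k, a j * (b j : Fin n → Fqm) i := by
              simp [Finset.sum_apply, smul_eq_mul]
          _ = ℓ (cols i) := by
              simp [ℓ, LinearMap.sum_apply, LinearMap.smul_apply, LinearMap.proj_apply,
                cols, smul_eq_mul]
      have hker : Submodule.span Fqm (Set.range cols) ≤ LinearMap.ker ℓ := by
        rw [← hs_span]
        apply Submodule.span_le.2
        intro v hv
        have h1 := hpick ⟨v, hv⟩
        have h2 : pick ⟨v, hv⟩ ∈ I := Finset.mem_image_of_mem pick (Finset.mem_univ _)
        have h3 := hcoord ⟨pick ⟨v, hv⟩, h2⟩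
        rw [hcols_eq] at h3
        rw [h1] at h3
        exact LinearMap.mem_ker.2 h3
      have hzero : ∀ i, (c : Fin n → Fqm) i = 0 := by
        intro i
        rw [hcols_eq i]
        exact LinearMap.mem_ker.1 (hker (Submodule.subset_span (Set.mem_range_self i)))
      exact Subtype.ext (funext hzero)
    have hkI : k ≤ I.card := by
      have h := LinearMap.finrank_le_finrank_of_injective hinj
      rwa [hC, Module.finrank_fintype_fun_eq_card, Fintype.card_coe] at h
    have hIk : I.card = k := le_antisymm hIcard hkI
    have hsurj : Function.Surjective Φ := by
      have hdim : finrank Fqm ↥C = finrank Fqm (↥I → Fqm) := by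
        rw [hC, Module.finrank_fintype_fun_eq_card, Fintype.card_coe, hIk]
      exact (LinearMap.injective_iff_surjective_of_finrank_eq_finrank hdim).1 hinj
    obtain ⟨c, hcΦ⟩ := hsurj (fun i => x (i : Fin n))
    have hyI : ∀ i ∈ I, (x - (c : Fin n → Fqm)) i = 0 := by
      intro i hi
      have h := congrFun hcΦ ⟨i, hi⟩
      have h2 : (c : Fin n → Fqm) i = x i := h
      simp [Pi.sub_apply, h2]
    have hwle : rankWeight Fq (x - (c : Fin n → Fqm)) ≤ n - k := by
      set y := x - (c : Fin n → Fqm) with hy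
      have hsub : Set.range y ⊆ insert 0 (y '' ↑(Iᶜ)) := by
        rintro _ ⟨i, rfl⟩
        by_cases hi : i ∈ I
        · rw [hyI i hi]; exact Set.mem_insert 0 _
        · exact Set.mem_insert_of_mem _ ⟨i, by simpa using hi, rfl⟩
      have h1 : Submodule.span Fq (Set.range y) ≤ Submodule.span Fq (y '' ↑(Iᶜ)) :=
        le_trans (Submodule.span_mono hsub) (Submodule.span_insert_zero).le
      have h2 : rankWeight Fq y ≤ finrank Fq (Submodule.span Fq (y '' ↑(Iᶜ))) :=
        Submodule.finrank_mono h1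
      have himg : y '' ↑(Iᶜ) = ↑((Iᶜ).image y) := by simp [Finset.coe_image]
      have h3 : finrank Fq (Submodule.span Fq (y '' ↑(Iᶜ))) ≤ (Iᶜ).card := by
        rw [himg]
        exact le_trans (finrank_span_finset_le_card (R := Fq) ((Iᶜ).image y))
          Finset.card_image_le
      have h4 : (Iᶜ : Finset (Fin n)).card = n - k := by
        rw [Finset.card_compl, hIk, Fintype.card_fin]
      omega
    have h5 := hx _ c.2
    omega
  -- cardinality of Fqm
  have hcard_qm : Fintype.card Fqm = q ^ m := by
    rw [card_eq_pow_finrank (K := Fq) (V := Fqm), hq, hm]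
  have hρm : ρ ≤ m := by omega
  -- Step A : sphere covering
  set B := rankBall Fq ρ (0 : Fin n → Fqm) with hBdef
  have hA : q ^ (m * n) ≤ q ^ (m * k) * Nat.card ↥B := by
    choose cf hcf1 hcf2 using hcov
    have hmemB : ∀ x : Fin n → Fqm, x - cf x ∈ B := by
      intro x
      show rankWeight Fq (x - cf x - 0) ≤ ρ
      simpa using hcf2 x
    have hf : Function.Injective
        (fun x : Fin n → Fqm => ((⟨cf x, hcf1 x⟩ : ↥C), (⟨x - cf x, hmemB x⟩ : ↥B))) := by
      intro x y hxy
      have h1 : cf x = cf y := congrArg (fun p => (p.1 : Fin n → Fqm)) hxy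
      have h2 : x - cf x = y - cf y := congrArg (fun p => (p.2 : Fin n → Fqm)) hxy
      rw [h1] at h2
      have := congrArg (fun z => z + cf y) h2
      simpa [sub_add_cancel] using this
    have hcount := Nat.card_le_card_of_injective _ hf
    rw [Nat.card_prod] at hcount
    have h1 : Nat.card (Fin n → Fqm) = q ^ (m * n) := by
      rw [Nat.card_eq_fintype_card, Fintype.card_pi]
      simp only [hcard_qm, Finset.prod_const, Finset.card_univ, Fintype.card_fin]
      rw [← pow_mul]
    have h2 : Nat.card ↥C = q ^ (m * k) := by
      letI : Fintype ↥C := Fintype.ofFinite _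
      rw [Nat.card_eq_fintype_card, card_eq_pow_finrank (K := Fqm) (V := ↥C), hC, hcard_qm,
        ← pow_mul]
    rw [h1, h2] at hcount
    exact hcount
  -- Step B : ball volume vs subspaces
  set N := Nat.card {U : Submodule Fq Fqm // finrank Fq ↥U = ρ} with hNdef
  have hBle : Nat.card ↥B ≤ N * q ^ (ρ * n) := by
    let bas : ∀ U : {U : Submodule Fq Fqm // finrank Fq ↥U = ρ}, Basis (Fin ρ) Fq ↥U.1 :=
      fun U => Module.finBasisOfFinrankEq Fq ↥U.1 U.2
    have hx_mem : ∀ x : ↥B,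
        finrank Fq (Submodule.span Fq (Set.range (x : Fin n → Fqm))) ≤ ρ := by
      intro x
      have h := x.2
      show finrank Fq (Submodule.span Fq (Set.range (x : Fin n → Fqm))) ≤ ρ
      have h2 : rankWeight Fq ((x : Fin n → Fqm) - 0) ≤ ρ := h
      rw [sub_zero] at h2
      exact h2
    choose Uf hUf1 hUf2 using fun x : ↥B =>
      Stmt14Aux.exists_superspace (Submodule.span Fq (Set.range (x : Fin n → Fqm))) ρ
        (hx_mem x) (by rw [hm]; exact hρm)
    let F : ↥B → {U : Submodule Fq Fqm // finrank Fq ↥U = ρ} × (Fin n → Fin ρ → Fq) :=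
      fun x => (⟨Uf x, hUf2 x⟩, fun i j =>
        (bas ⟨Uf x, hUf2 x⟩).repr
          ⟨(x : Fin n → Fqm) i, hUf1 x (Submodule.subset_span (Set.mem_range_self i))⟩ j)
    have hrecon : ∀ x : ↥B, ∀ i : Fin n,
        (x : Fin n → Fqm) i = ∑ j : Fin ρ, (F x).2 i j • ((bas (F x).1) j : Fqm) := by
      intro x i
      have hmem : (x : Fin n → Fqm) i ∈ Uf x :=
        hUf1 x (Submodule.subset_span (Set.mem_range_self i))
      have h := (bas (F x).1).sum_repr ⟨(x : Fin n → Fqm) i, hmem⟩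
      calc (x : Fin n → Fqm) i
          = ((⟨(x : Fin n → Fqm) i, hmem⟩ : ↥((F x).1.1)) : Fqm) := rfl
        _ = ((∑ j : Fin ρ, (bas (F x).1).repr ⟨(x : Fin n → Fqm) i, hmem⟩ j • (bas (F x).1) j :
              ↥((F x).1.1)) : Fqm) := by rw [h]
        _ = ∑ j : Fin ρ, (F x).2 i j • ((bas (F x).1) j : Fqm) := by
            rw [Submodule.coe_sum]
            rfl
    have hFinj : Function.Injective F := by
      intro x y hxy
      apply Subtype.ext
      funext i
      rw [hrecon x i, hrecon y i, hxy]
    have hcount := Nat.card_le_card_of_injective _ hFinj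
    rw [Nat.card_prod] at hcount
    have h3 : Nat.card (Fin n → Fin ρ → Fq) = q ^ (ρ * n) := by
      rw [Nat.card_eq_fintype_card, Fintype.card_pi]
      simp only [Fintype.card_pi, Finset.prod_const, Finset.card_univ, Fintype.card_fin, hq]
      rw [← pow_mul]
    rw [h3] at hcount
    exact hcount
  -- Step C : subspace count
  have hNcount := Stmt14Aux.card_subspaces_mul (K := Fq) (V := Fqm) ρ (by rw [hm]; exact hρm)
  rw [hq, hm] at hNcount
  rw [← hNdef] at hNcount
  -- Real arithmetic
  set Q : ℝ := (q : ℝ) with hQdef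
  have hQ1 : (1 : ℝ) < Q := by rw [hQdef]; exact_mod_cast hq2
  have hQ0 : (0 : ℝ) < Q := lt_trans one_pos hQ1
  set P : ℝ := ∏ j ∈ Finset.range ρ, (1 - Q⁻¹ ^ (j + 1)) with hPdef
  have hfacpos : ∀ j : ℕ, 0 < 1 - Q⁻¹ ^ (j + 1) := by
    intro j
    have h1 : Q⁻¹ < 1 := by
      rw [inv_lt_one_iff₀]; right; exact hQ1
    have h2 : Q⁻¹ ^ (j + 1) < 1 :=
      pow_lt_one₀ (inv_pos.2 hQ0).le h1 (Nat.succ_ne_zero j)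
    linarith
  have hPpos : 0 < P := Finset.prod_pos (fun j _ => hfacpos j)
  -- cast products
  have hprodρ : ((∏ i : Fin ρ, (q ^ ρ - q ^ (i : ℕ)) : ℕ) : ℝ) = Q ^ (ρ * ρ) * P := by
    have hle : ∀ i : Fin ρ, q ^ (i : ℕ) ≤ q ^ ρ := fun i =>
      Nat.pow_le_pow_right (by omega) i.2.le
    rw [Nat.cast_prod]
    have hcast : ∀ i : Fin ρ, ((q ^ ρ - q ^ (i : ℕ) : ℕ) : ℝ) = Q ^ ρ - Q ^ (i : ℕ) := by
      intro i
      rw [Nat.cast_sub (hle i)]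
      push_cast [hQdef]
      ring
    rw [Finset.prod_congr rfl (fun i _ => hcast i)]
    rw [Fin.prod_univ_eq_prod_range (fun i => Q ^ ρ - Q ^ i) ρ]
    have hfac : ∀ i ∈ Finset.range ρ, Q ^ ρ - Q ^ i = Q ^ ρ * (1 - Q⁻¹ ^ (ρ - i)) := by
      intro i hi
      rw [Finset.mem_range] at hi
      have h5 : Q ^ i * Q ^ (ρ - i) = Q ^ ρ := by
        rw [← pow_add]; congr 1; omega
      have hz : Q ^ (ρ - i) ≠ 0 := by positivity
      have h6 : Q ^ ρ * (Q ^ (ρ - i))⁻¹ = Q ^ i := by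
        rw [← h5, mul_inv_cancel_right₀ hz]
      rw [mul_sub, mul_one, inv_pow, h6]
    rw [Finset.prod_congr rfl hfac, Finset.prod_mul_distrib, Finset.prod_const,
      Finset.card_range, ← pow_mul]
    congr 1
    rw [hPdef, ← Finset.prod_range_reflect (fun j => 1 - Q⁻¹ ^ (j + 1)) ρ]
    apply Finset.prod_congr rfl
    intro i hi
    rw [Finset.mem_range] at hi
    congr 2
    omega
  have hprodm : ((∏ i : Fin ρ, (q ^ m - q ^ (i : ℕ)) : ℕ) : ℝ) ≤ Q ^ (ρ * m) := by
    have hle : ∀ i : Fin ρ, q ^ (i : ℕ) ≤ q ^ m := fun i =>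
      Nat.pow_le_pow_right (by omega) (by omega)
    rw [Nat.cast_prod]
    have hcast : ∀ i : Fin ρ, ((q ^ m - q ^ (i : ℕ) : ℕ) : ℝ) = Q ^ m - Q ^ (i : ℕ) := by
      intro i
      rw [Nat.cast_sub (hle i)]
      push_cast [hQdef]
      ring
    rw [Finset.prod_congr rfl (fun i _ => hcast i)]
    calc ∏ i : Fin ρ, (Q ^ m - Q ^ (i : ℕ))
        ≤ ∏ _i : Fin ρ, Q ^ m := by
          apply Finset.prod_le_prod
          · intro i _
            have : Q ^ (i : ℕ) ≤ Q ^ m := pow_le_pow_right₀ hQ1.le (by omega)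
            linarith
          · intro i _
            have : (0 : ℝ) ≤ Q ^ (i : ℕ) := by positivity
            linarith
      _ = Q ^ (ρ * m) := by
          rw [Finset.prod_const, Finset.card_univ, Fintype.card_fin, ← pow_mul, mul_comm m ρ]
  -- cast main inequalities
  have hreal1 : Q ^ (m * n) ≤ Q ^ (m * k) * (Nat.card ↥B : ℝ) := by
    rw [hQdef]
    exact_mod_cast hA
  have hreal2 : ((Nat.card ↥B : ℕ) : ℝ) ≤ (N : ℝ) * Q ^ (ρ * n) := by
    rw [hQdef]
    exact_mod_cast hBle
  have hrealN : (N : ℝ) * (Q ^ (ρ * ρ) * P) ≤ Q ^ (ρ * m) := by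
    have hcast : (N : ℝ) * ((∏ i : Fin ρ, (q ^ ρ - q ^ (i : ℕ)) : ℕ) : ℝ) =
        ((∏ i : Fin ρ, (q ^ m - q ^ (i : ℕ)) : ℕ) : ℝ) := by
      exact_mod_cast hNcount
    rw [hprodρ] at hcast
    rw [hcast]
    exact hprodm
  have hchain : Q ^ (m * n) * (Q ^ (ρ * ρ) * P) ≤ Q ^ (m * k) * Q ^ (ρ * n) * Q ^ (ρ * m) := by
    have hBnn : (0 : ℝ) ≤ (Nat.card ↥B : ℝ) := Nat.cast_nonneg _
    have hNnn : (0 : ℝ) ≤ (N : ℝ) := Nat.cast_nonneg _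
    calc Q ^ (m * n) * (Q ^ (ρ * ρ) * P)
        ≤ (Q ^ (m * k) * (Nat.card ↥B : ℝ)) * (Q ^ (ρ * ρ) * P) := by
          apply mul_le_mul_of_nonneg_right hreal1
          positivity
      _ ≤ (Q ^ (m * k) * ((N : ℝ) * Q ^ (ρ * n))) * (Q ^ (ρ * ρ) * P) := by
          apply mul_le_mul_of_nonneg_right _ (by positivity)
          exact mul_le_mul_of_nonneg_left hreal2 (by positivity)
      _ = Q ^ (m * k) * Q ^ (ρ * n) * ((N : ℝ) * (Q ^ (ρ * ρ) * P)) := by ring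
      _ ≤ Q ^ (m * k) * Q ^ (ρ * n) * Q ^ (ρ * m) := by
          exact mul_le_mul_of_nonneg_left hrealN (by positivity)
  -- take logs
  set L : ℝ := Real.log Q with hLdef
  have hL : 0 < L := Real.log_pos hQ1
  have hlog := Real.log_le_log (by positivity) hchain
  rw [Real.log_mul (by positivity) (by positivity), Real.log_mul (by positivity) hPpos.ne',
    Real.log_mul (by positivity) (by positivity), Real.log_mul (by positivity) (by positivity),
    Real.log_pow, Real.log_pow, Real.log_pow, Real.log_pow, Real.log_pow] at hlog
  have hsigma := Stmt14Aux.sigma_bound q hq2 ρ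
  have hlogP : -Real.log P = ∑ j ∈ Finset.range ρ, -Real.log (1 - Q⁻¹ ^ (j + 1)) := by
    rw [hPdef, Real.log_prod (fun j _ => (hfacpos j).ne')]
    rw [← Finset.sum_neg_distrib]
  have hlogPlt : -Real.log P < L * sigmaQ q := by
    rw [hlogP]
    rw [hLdef, hQdef]
    exact hsigma
  -- combine: (m*n)L + (ρ*ρ)L + log P ≤ (m*k)L + (ρ*n)L + (ρ*m)L
  have hmain : ((m : ℝ) * n + (ρ : ℝ) * ρ) * L < ((m : ℝ) * k + (ρ : ℝ) * n + (ρ : ℝ) * m) * L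
      + L * sigmaQ q := by
    push_cast at hlog
    linarith [hlog, hlogPlt]
  have hfinal : (m : ℝ) * n + (ρ : ℝ) * ρ < (m : ℝ) * k + (ρ : ℝ) * n + (ρ : ℝ) * m
      + sigmaQ q := by
    have h2 : ((m : ℝ) * n + (ρ : ℝ) * ρ) * L <
        ((m : ℝ) * k + (ρ : ℝ) * n + (ρ : ℝ) * m + sigmaQ q) * L := by
      ring_nf
      ring_nf at hmain
      linarith [hmain]
    exact lt_of_mul_lt_mul_right h2 hL.le
  constructor
  · rw [Int.add_one_le_iff, Int.floor_lt]
    push_cast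
    have hm0 : (0 : ℝ) < (m : ℝ) := by
      have : 0 < m := by omega
      exact_mod_cast this
    have h10 : ((n : ℝ) - ρ - k) * m < (ρ : ℝ) * ((n : ℝ) - ρ) + sigmaQ q := by
      ring_nf
      ring_nf at hfinal
      linarith [hfinal]
    have h11 : (n : ℝ) - ρ - k < ((ρ : ℝ) * ((n : ℝ) - ρ) + sigmaQ q) / m := by
      rw [lt_div_iff₀ hm0]
      exact h10
    linarith
  · omega


end
end

section
/- Let v ∈ GF(q^m)^r have rank r (0 ≤ r ≤ m), and let L = ⟨v⟩^⊥ be the dual code of the one-dimensional code spanned by v with respect to the standard inner product. Then for 0 ≤ p ≤ r, the number of vectors of rank p in L equals [r p]_q · q^{−m}·(α(m,p) + (q^m − 1)(−1)^p q^{p(p−1)/2}); in particular this rank weight distribution depends only on r. -/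
open scoped BigOperators

noncomputable section

/-! ### Auxiliary material for `stmt15` -/

section Stmt15Aux

set_option linter.unusedSectionVars false
set_option linter.unusedVariables false

open Submodule Module

/-- natural-exponent version of `alphaQ` -/
def alphaN (q n k : ℕ) : ℚ := ∏ i ∈ Finset.range k, ((q:ℚ)^n - (q:ℚ)^i)

lemma alphaQ_eq_alphaN (q n k : ℕ) : alphaQ q (n : ℤ) k = alphaN q n k := by
  unfold alphaQ alphaN
  exact Finset.prod_congr rfl fun i _ => by rw [zpow_natCast]

lemma alphaN_zero (q n : ℕ) : alphaN q n 0 = 1 := by simp [alphaN]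

lemma alphaN_succ (q n k : ℕ) : alphaN q n (k+1) = alphaN q n k * ((q:ℚ)^n - (q:ℚ)^k) :=
  Finset.prod_range_succ _ _

lemma alphaN_self_succ (q k : ℕ) :
    alphaN q (k+1) (k+1) = (q:ℚ)^k * ((q:ℚ)^(k+1) - 1) * alphaN q k k := by
  unfold alphaN
  rw [Finset.prod_range_succ']
  have h : ∀ i ∈ Finset.range k, ((q:ℚ)^(k+1) - (q:ℚ)^(i+1)) = (q:ℚ) * ((q:ℚ)^k - (q:ℚ)^i) := by
    intro i _; ring
  rw [Finset.prod_congr rfl h, Finset.prod_mul_distrib, Finset.prod_const, Finset.card_range]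
  ring

lemma alphaN_self_ne_zero {q : ℕ} (hq : 2 ≤ q) (k : ℕ) : alphaN q k k ≠ 0 := by
  unfold alphaN
  rw [Finset.prod_ne_zero_iff]
  intro i hi
  have h1 : (1:ℚ) < (q:ℚ) := by exact_mod_cast hq
  have := pow_lt_pow_right₀ h1 (Finset.mem_range.1 hi)
  intro h; rw [sub_eq_zero] at h; exact absurd h.symm (ne_of_lt this)

lemma alphaPascal (q n k : ℕ) :
    alphaN q (n+1) (k+1) = (q:ℚ)^(k+1) * alphaN q n (k+1)
      + (q:ℚ)^k * ((q:ℚ)^(k+1) - 1) * alphaN q n k := by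
  induction k with
  | zero => simp [alphaN]; ring
  | succ k ih =>
    rw [alphaN_succ q (n+1) (k+1), ih, alphaN_succ q n (k+1), alphaN_succ q n k]
    ring

lemma gauss_pascal {q : ℕ} (hq : 2 ≤ q) (n k : ℕ) :
    gaussQ q (n+1) (k+1) = (q:ℚ)^(k+1) * gaussQ q n (k+1) + gaussQ q n k := by
  unfold gaussQ
  simp only [alphaQ_eq_alphaN]
  rw [alphaN_self_succ q k, alphaPascal q n k]
  have h1 : alphaN q k k ≠ 0 := alphaN_self_ne_zero hq k
  have h2 : (q:ℚ)^k ≠ 0 := pow_ne_zero _ (by positivity)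
  have h3 : (q:ℚ)^(k+1) - 1 ≠ 0 := by
    have h1 : (1:ℚ) < (q:ℚ) := by exact_mod_cast hq
    have := one_lt_pow₀ h1 (Nat.succ_ne_zero k)
    intro h; rw [sub_eq_zero] at h; exact absurd h.symm (ne_of_lt this)
  field_simp

/-- the closed-form rank weight distribution value -/
def FF (q m r p : ℕ) : ℚ :=
  gaussQ q r p * (alphaN q m p + ((q:ℚ)^m - 1) * (-1:ℚ)^p * (q:ℚ)^(p*(p-1)/2)) / (q:ℚ)^m

lemma gaussQ_zero (q n : ℕ) : gaussQ q n 0 = 1 := by simp [gaussQ, alphaQ]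

lemma gaussQ_eq_zero_of_lt {q n k : ℕ} (h : n < k) : gaussQ q n k = 0 := by
  unfold gaussQ
  rw [alphaQ_eq_alphaN]
  rw [show alphaN q n k = 0 from Finset.prod_eq_zero (Finset.mem_range.2 h) (sub_self _)]
  simp

lemma FF_eq_zero_of_lt {q m n k : ℕ} (h : n < k) : FF q m n k = 0 := by
  rw [FF, gaussQ_eq_zero_of_lt h]; simp

lemma FF_zero {q : ℕ} (hq : 2 ≤ q) (m r : ℕ) : FF q m r 0 = 1 := by
  have hm0 : (q:ℚ)^m ≠ 0 := pow_ne_zero _ (by positivity)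
  rw [FF, gaussQ_zero, alphaN_zero]
  field_simp
  simp only [zero_mul, Nat.zero_div, pow_zero, mul_one]
  ring

lemma triangle_succ (p : ℕ) : (p+1)*((p+1)-1)/2 = p*(p-1)/2 + p := by
  calc (p+1)*((p+1)-1)/2 = (p+1).choose 2 := (Nat.choose_two_right _).symm
    _ = p.choose 1 + p.choose 2 := Nat.choose_succ_succ' p 1
    _ = p*(p-1)/2 + p := by rw [Nat.choose_one_right, Nat.choose_two_right]; omega

lemma FF_succ {q : ℕ} (hq : 2 ≤ q) (m n p : ℕ) :
    FF q m (n+1) (p+1)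
      = (q:ℚ)^(p+1) * FF q m n (p+1) + gaussQ q n p * alphaN q m p - (q:ℚ)^p * FF q m n p := by
  have hm0 : (q:ℚ)^m ≠ 0 := pow_ne_zero _ (by positivity)
  unfold FF
  rw [gauss_pascal hq n p, alphaN_succ q m p, triangle_succ, pow_add]
  field_simp
  ring

lemma nat_card_setOf {α : Type} [Fintype α] (p : α → Prop) [DecidablePred p] :
    (Nat.card {x : α | p x}) = (Finset.univ.filter p).card := by
  rw [Nat.card_eq_fintype_card]
  convert Fintype.card_subtype p
  exact Iff.rfl

lemma sum_ite_card {α : Type} [Fintype α] (p : α → Prop) [DecidablePred p] (c : ℚ) :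
    (∑ u : α, if p u then c else 0)
      = (Nat.card {u : α | p u} : ℚ) * c := by
  rw [nat_card_setOf, ← Finset.sum_filter, Finset.sum_const, nsmul_eq_mul]

open scoped Classical

lemma nat_card_sigma {ι : Type} [Fintype ι] (f : ι → Type) [∀ i, Finite (f i)] :
    Nat.card (Σ i, f i) = ∑ i, Nat.card (f i) := by
  letI : ∀ i, Fintype (f i) := fun i => Fintype.ofFinite _
  rw [Nat.card_eq_fintype_card, Fintype.card_sigma]
  exact Finset.sum_congr rfl fun i _ => (Nat.card_eq_fintype_card).symm

/-- sigma-style splitting of a set over a product into fibers over the second coordinate -/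
def sigmaEquivProdSet {α β : Type} (P : α → β → Prop) :
    (Σ b : β, {a : α | P a b}) ≃ {x : α × β | P x.1 x.2} where
  toFun := fun ⟨b, a, h⟩ => ⟨(a, b), h⟩
  invFun := fun ⟨(a, b), h⟩ => ⟨b, a, h⟩
  left_inv := fun ⟨b, a, h⟩ => rfl
  right_inv := fun ⟨(a, b), h⟩ => rfl

/-- sigma-style splitting of a set over a product into fibers over the first coordinate -/
def sigmaEquivProdSet' {α β : Type} (P : α → β → Prop) :
    (Σ a : α, {b : β | P a b}) ≃ {x : α × β | P x.1 x.2} where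
  toFun := fun ⟨a, b, h⟩ => ⟨(a, b), h⟩
  invFun := fun ⟨(a, b), h⟩ => ⟨a, b, h⟩
  left_inv := fun ⟨a, b, h⟩ => rfl
  right_inv := fun ⟨(a, b), h⟩ => rfl

lemma card_union_disjoint {α : Type} [Fintype α] {s t : Set α} (h : Disjoint s t) :
    Nat.card (↥(s ∪ t)) = Nat.card s + Nat.card t := by
  simp only [Nat.card_coe_set_eq]
  exact Set.ncard_union_eq h (Set.toFinite s) (Set.toFinite t)

variable {q m : ℕ} {Fq Fqm : Type} [Field Fq] [Fintype Fq] [Field Fqm] [Fintype Fqm]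
  [Algebra Fq Fqm]

lemma two_le_q (hq : Fintype.card Fq = q) : 2 ≤ q := hq ▸ Fintype.one_lt_card

lemma card_Fqm (hq : Fintype.card Fq = q) (hm : Module.finrank Fq Fqm = m) :
    Fintype.card Fqm = q ^ m := by
  rw [← hq, ← hm]; exact card_eq_pow_finrank (K := Fq)

lemma card_submodule {V : Type} [AddCommGroup V] [Module Fq V] [Finite V]
    (hq : Fintype.card Fq = q) (W : Submodule Fq V) :
    Nat.card W = q ^ Module.finrank Fq W := by
  cases nonempty_fintype V
  have : Fintype W := Fintype.ofFinite _
  rw [Nat.card_eq_fintype_card, ← hq]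
  exact card_eq_pow_finrank (K := Fq)

lemma rankWeight_le {n : ℕ} (u : Fin n → Fqm) : rankWeight Fq u ≤ n := by
  have := finrank_range_le_card (R := Fq) u
  simpa [rankWeight, Fintype.card_fin, Set.finrank] using this

lemma rankWeight_le_m {n : ℕ} (hm : Module.finrank Fq Fqm = m) (u : Fin n → Fqm) :
    rankWeight Fq u ≤ m := hm ▸ Submodule.finrank_le _

lemma rankWeight_eq_zero_iff {n : ℕ} (u : Fin n → Fqm) :
    rankWeight Fq u = 0 ↔ u = 0 := by
  rw [rankWeight, Submodule.finrank_eq_zero, Submodule.span_eq_bot]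
  constructor
  · intro h; funext i; exact h (u i) ⟨i, rfl⟩
  · rintro rfl x ⟨i, rfl⟩; rfl

lemma rankWeight_cons_mem {n : ℕ} {x : Fqm} {u : Fin n → Fqm}
    (h : x ∈ span Fq (Set.range u)) :
    rankWeight Fq (Fin.cons x u) = rankWeight Fq u := by
  rw [rankWeight, Fin.range_cons, Submodule.span_insert_eq_span h]; rfl

lemma rankWeight_cons_not_mem {n : ℕ} {x : Fqm} {u : Fin n → Fqm}
    (h : x ∉ span Fq (Set.range u)) :
    rankWeight Fq (Fin.cons x u) = rankWeight Fq u + 1 := by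
  have hx0 : x ≠ 0 := fun h0 => h (h0 ▸ Submodule.zero_mem _)
  have hd : Disjoint (span Fq (Set.range u)) (Fq ∙ x) :=
    (Submodule.disjoint_span_singleton' hx0).2 h
  have key := Submodule.finrank_sup_add_finrank_inf_eq (Fq ∙ x) (span Fq (Set.range u))
  rw [disjoint_iff.1 hd.symm, finrank_bot, finrank_span_singleton hx0] at key
  rw [rankWeight, Fin.range_cons, Submodule.span_insert]
  rw [rankWeight]
  omega

lemma linearIndependent_of_rankWeight {n : ℕ} {v : Fin n → Fqm}
    (hv : rankWeight Fq v = n) : LinearIndependent Fq v := by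
  apply linearIndependent_iff_card_eq_finrank_span.2
  rw [Fintype.card_fin, Set.finrank]
  exact hv.symm

lemma rankWeight_eq_of_linearIndependent {n : ℕ} {v : Fin n → Fqm}
    (hv : LinearIndependent Fq v) : rankWeight Fq v = n := by
  have := linearIndependent_iff_card_eq_finrank_span.1 hv
  rw [Fintype.card_fin, Set.finrank] at this
  exact this.symm

/-- counting solutions `a` of `∑ (algebraMap (a i)) * u i = t`. -/
lemma card_fiber (hq : Fintype.card Fq = q) {n : ℕ} (u : Fin n → Fqm) (t : Fqm) :
    Nat.card {a : Fin n → Fq | ∑ i, algebraMap Fq Fqm (a i) * u i = t}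
      = if t ∈ span Fq (Set.range u) then q ^ (n - rankWeight Fq u) else 0 := by
  set φ : (Fin n → Fq) →ₗ[Fq] Fqm := Fintype.linearCombination Fq u with hφdef
  have hφ : ∀ a, φ a = ∑ i, algebraMap Fq Fqm (a i) * u i := by
    intro a
    rw [hφdef, Fintype.linearCombination_apply]
    exact Finset.sum_congr rfl fun i _ => Algebra.smul_def _ _
  have hrange : LinearMap.range φ = span Fq (Set.range u) :=
    Fintype.range_linearCombination Fq u
  by_cases ht : t ∈ span Fq (Set.range u)
  · rw [if_pos ht]
    rw [← hrange] at ht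
    obtain ⟨a₀, ha₀⟩ := ht
    have e : {a : Fin n → Fq | ∑ i, algebraMap Fq Fqm (a i) * u i = t} ≃ LinearMap.ker φ :=
      { toFun := fun a => ⟨a.1 - a₀, by
          have := a.2
          simp only [Set.mem_setOf_eq, ← hφ] at this
          simp [LinearMap.mem_ker, map_sub, this, ha₀]⟩
        invFun := fun b => ⟨b.1 + a₀, by
          have hb := b.2
          rw [LinearMap.mem_ker] at hb
          simp only [Set.mem_setOf_eq, ← hφ, map_add, hb, ha₀, zero_add]⟩
        left_inv := fun a => by ext : 1; simp
        right_inv := fun b => by ext : 1; simp }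
    rw [Nat.card_congr e, card_submodule hq]
    congr 1
    have h2 := LinearMap.finrank_range_add_finrank_ker φ
    rw [hrange, Module.finrank_fin_fun] at h2
    have h3 : rankWeight Fq u ≤ n := by
      have := finrank_range_le_card (R := Fq) u
      simpa [rankWeight, Fintype.card_fin, Set.finrank] using this
    unfold rankWeight
    omega
  · rw [if_neg ht]
    rw [Nat.card_eq_zero]
    left
    constructor
    intro a
    exact ht (by rw [← hrange]; exact ⟨a.1, (hφ a.1).trans a.2⟩)

/-- linear independence of the perturbed family. -/
lemma rankWeight_perturbed {n : ℕ} {v : Fin (n+1) → Fqm}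
    (hv : LinearIndependent Fq v) (a : Fin n → Fq) :
    LinearIndependent Fq (fun i : Fin n => v i.succ - algebraMap Fq Fqm (a i) * v 0) := by
  rw [Fintype.linearIndependent_iff]
  intro g hg
  set G : Fin (n+1) → Fq := Fin.cons (- ∑ i, g i * a i) g with hG
  have hsum : ∑ j, G j • v j = 0 := by
    rw [Fin.sum_univ_succ]
    simp only [hG, Fin.cons_zero, Fin.cons_succ]
    have expand : ∀ i : Fin n, g i • (v i.succ - algebraMap Fq Fqm (a i) * v 0)
        = g i • v i.succ - (g i * a i) • v 0 := by
      intro i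
      rw [smul_sub]
      congr 1
      rw [Algebra.smul_def, Algebra.smul_def, map_mul]
      ring
    rw [Finset.sum_congr rfl (fun i _ => expand i), Finset.sum_sub_distrib] at hg
    rw [← Finset.sum_smul] at hg
    have : (- ∑ i, g i * a i) • v 0 = - ((∑ i, g i * a i) • v 0) := by
      rw [neg_smul]
    rw [this]
    linear_combination (norm := module) hg
  have hz := Fintype.linearIndependent_iff.1 hv G hsum
  intro i
  have := hz i.succ
  rwa [hG, Fin.cons_succ] at this

lemma Rcount (hq : Fintype.card Fq = q) (hm : Module.finrank Fq Fqm = m) :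
    ∀ (n k : ℕ), (Nat.card {u : Fin n → Fqm | rankWeight Fq u = k} : ℚ)
      = gaussQ q n k * alphaN q m k := by
  intro n
  induction n with
  | zero =>
    intro k
    cases k with
    | zero =>
      rw [gaussQ_zero, alphaN_zero]
      have hset : {u : Fin 0 → Fqm | rankWeight Fq u = 0} = Set.univ := by
        ext u
        simp [rankWeight, Set.range_eq_empty]
      rw [hset]
      rw [Nat.card_eq_fintype_card]
      simp
    | succ k =>
      rw [gaussQ_eq_zero_of_lt (Nat.succ_pos k)]
      have hset : {u : Fin 0 → Fqm | rankWeight Fq u = k+1} = ∅ := by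
        ext u
        have hz : rankWeight Fq u = 0 := by
          simp [rankWeight, Set.range_eq_empty]
        simp [hz]
      rw [hset]
      simp
  | succ n IH =>
    intro k
    cases k with
    | zero =>
      rw [gaussQ_zero, alphaN_zero]
      have hset : {u : Fin (n+1) → Fqm | rankWeight Fq u = 0} = {0} := by
        ext u
        simp [rankWeight_eq_zero_iff]
      rw [hset]
      rw [Nat.card_coe_set_eq, Set.ncard_singleton]
      norm_num
    | succ k =>
      have hq2 : 2 ≤ q := two_le_q hq
      -- step 1: peel off the first coordinate
      have e1 : {u : Fin (n+1) → Fqm | rankWeight Fq u = k+1}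
          ≃ {x : Fqm × (Fin n → Fqm) | rankWeight Fq (Fin.cons x.1 x.2) = k+1} :=
        { toFun := fun u => ⟨(u.1 0, Fin.tail u.1), by
            have : Fin.cons (u.1 0) (Fin.tail u.1) = u.1 := Fin.cons_self_tail u.1
            simp only [Set.mem_setOf_eq, this]
            exact u.2⟩
          invFun := fun x => ⟨Fin.cons x.1.1 x.1.2, x.2⟩
          left_inv := fun u => by
            ext : 1
            exact Fin.cons_self_tail u.1
          right_inv := fun x => Subtype.ext (by simp [Fin.tail_cons]) }
      rw [Nat.card_congr e1,
        Nat.card_congr (sigmaEquivProdSet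
          (fun x u' => rankWeight Fq (Fin.cons x u') = k+1)).symm,
        nat_card_sigma]
      push_cast
      have inner : ∀ u' : Fin n → Fqm,
          ((Nat.card {x : Fqm | rankWeight Fq (Fin.cons x u') = k+1}) : ℚ)
          = (if rankWeight Fq u' = k+1 then (q:ℚ)^(k+1) else 0)
            + (if rankWeight Fq u' = k then (q:ℚ)^m - (q:ℚ)^k else 0) := by
        intro u'
        by_cases h1 : rankWeight Fq u' = k+1
        · rw [if_pos h1, if_neg (by omega), add_zero]
          have hset : {x : Fqm | rankWeight Fq (Fin.cons x u') = k+1}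
              = {x : Fqm | x ∈ span Fq (Set.range u')} := by
            ext x
            simp only [Set.mem_setOf_eq]
            constructor
            · intro hx
              by_contra hmem
              rw [rankWeight_cons_not_mem hmem] at hx
              omega
            · intro hmem
              rw [rankWeight_cons_mem hmem]
              exact h1
          rw [hset]
          have : Nat.card {x : Fqm | x ∈ span Fq (Set.range u')}
              = Nat.card (span Fq (Set.range u')) := rfl
          rw [this, card_submodule hq]
          rw [show Module.finrank Fq (span Fq (Set.range u')) = rankWeight Fq u' from rfl, h1]
          push_cast
          ring
        · by_cases h2 : rankWeight Fq u' = k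
          · rw [if_neg h1, if_pos h2, zero_add]
            have hset : {x : Fqm | rankWeight Fq (Fin.cons x u') = k+1}
                = {x : Fqm | x ∈ span Fq (Set.range u')}ᶜ := by
              ext x
              simp only [Set.mem_setOf_eq, Set.mem_compl_iff]
              constructor
              · intro hx hmem
                rw [rankWeight_cons_mem hmem] at hx
                omega
              · intro hmem
                rw [rankWeight_cons_not_mem hmem, h2]
            rw [hset]
            have hcompl : Nat.card ↥({x : Fqm | x ∈ span Fq (Set.range u')}ᶜ)
                = Fintype.card Fqm - Nat.card {x : Fqm | x ∈ span Fq (Set.range u')} := by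
              have h := Set.ncard_add_ncard_compl {x : Fqm | x ∈ span Fq (Set.range u')}
              simp only [← Nat.card_coe_set_eq] at h
              have h2 : Nat.card Fqm = Fintype.card Fqm := Nat.card_eq_fintype_card
              omega
            have hspan : Nat.card {x : Fqm | x ∈ span Fq (Set.range u')} = q ^ k := by
              have : Nat.card {x : Fqm | x ∈ span Fq (Set.range u')}
                  = Nat.card (span Fq (Set.range u')) := rfl
              rw [this, card_submodule hq,
                show Module.finrank Fq (span Fq (Set.range u')) = rankWeight Fq u' from rfl, h2]
            rw [hcompl, hspan, card_Fqm hq hm]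
            have hle : q ^ k ≤ q ^ m :=
              Nat.pow_le_pow_right (by omega) (h2 ▸ rankWeight_le_m hm u')
            push_cast [hle]
            ring
          · rw [if_neg h1, if_neg h2, add_zero]
            have hset : {x : Fqm | rankWeight Fq (Fin.cons x u') = k+1} = ∅ := by
              ext x
              simp only [Set.mem_setOf_eq, Set.mem_empty_iff_false, iff_false]
              intro hx
              by_cases hmem : x ∈ span Fq (Set.range u')
              · rw [rankWeight_cons_mem hmem] at hx; omega
              · rw [rankWeight_cons_not_mem hmem] at hx; omega
            rw [hset]
            simp
      rw [Finset.sum_congr rfl (fun u' _ => inner u')]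
      have s1 : (∑ x : Fin n → Fqm, if rankWeight Fq x = k + 1 then (q:ℚ)^(k+1) else 0)
          = (Nat.card {u : Fin n → Fqm | rankWeight Fq u = k+1} : ℚ) * (q:ℚ)^(k+1) :=
        sum_ite_card _ _
      have s2 : (∑ x : Fin n → Fqm, if rankWeight Fq x = k then (q:ℚ)^m - (q:ℚ)^k else 0)
          = (Nat.card {u : Fin n → Fqm | rankWeight Fq u = k} : ℚ) * ((q:ℚ)^m - (q:ℚ)^k) :=
        sum_ite_card _ _
      rw [Finset.sum_add_distrib, s1, s2, IH (k+1), IH k]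
      rw [gauss_pascal hq2 n k, alphaN_succ q m k]
      ring

lemma mainCount (hq : Fintype.card Fq = q) (hm : Module.finrank Fq Fqm = m) :
    ∀ (r : ℕ) (v : Fin r → Fqm), rankWeight Fq v = r → ∀ p : ℕ,
    (Nat.card {u : Fin r → Fqm | (∑ i, u i * v i = 0) ∧ rankWeight Fq u = p} : ℚ)
      = FF q m r p := by
  intro r
  induction r with
  | zero =>
    intro v hv p
    cases p with
    | zero =>
      have hset : {u : Fin 0 → Fqm | (∑ i, u i * v i = 0) ∧ rankWeight Fq u = 0}
          = Set.univ := by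
        ext u
        have hz : rankWeight Fq u = 0 := by
          simp [rankWeight, Set.range_eq_empty]
        simp [hz]
      rw [hset, FF_zero (two_le_q hq), Nat.card_eq_fintype_card]
      simp
    | succ p =>
      have hset : {u : Fin 0 → Fqm | (∑ i, u i * v i = 0) ∧ rankWeight Fq u = p+1}
          = ∅ := by
        ext u
        have hz : rankWeight Fq u = 0 := by
          simp [rankWeight, Set.range_eq_empty]
        simp [hz]
      rw [hset, FF_eq_zero_of_lt (Nat.succ_pos p)]
      simp
  | succ n IH =>
    intro v hv p
    have hq2 : 2 ≤ q := two_le_q hq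
    have hq0 : (q:ℚ) ≠ 0 := by positivity
    have hvi : LinearIndependent Fq v := linearIndependent_of_rankWeight hv
    have hv0 : v 0 ≠ 0 := hvi.ne_zero 0
    set x : (Fin n → Fqm) → Fqm := fun u' => -(∑ i, u' i * v i.succ) / v 0 with hx
    have key1 : ∀ u : Fin (n+1) → Fqm, (∑ i, u i * v i = 0) → u 0 = x (Fin.tail u) := by
      intro u hsum
      rw [Fin.sum_univ_succ] at hsum
      have h1 : u 0 * v 0 = -(∑ i : Fin n, u i.succ * v i.succ) :=
        eq_neg_of_add_eq_zero_left hsum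
      rw [hx]
      show u 0 = -(∑ i : Fin n, Fin.tail u i * v i.succ) / v 0
      rw [eq_div_iff hv0]
      exact h1
    have key2 : ∀ u' : Fin n → Fqm, (∑ i, (Fin.cons (x u') u' : Fin (n+1) → Fqm) i * v i) = 0 := by
      intro u'
      rw [Fin.sum_univ_succ]
      simp only [Fin.cons_zero, Fin.cons_succ]
      rw [hx]
      show -(∑ i : Fin n, u' i * v i.succ) / v 0 * v 0 + (∑ i : Fin n, u' i * v i.succ) = 0
      rw [div_mul_cancel₀ _ hv0]
      ring
    have e1 : {u : Fin (n+1) → Fqm | (∑ i, u i * v i = 0) ∧ rankWeight Fq u = p}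
        ≃ {u' : Fin n → Fqm | rankWeight Fq (Fin.cons (x u') u') = p} :=
      { toFun := fun u => ⟨Fin.tail u.1, by
          have hu0 : u.1 0 = x (Fin.tail u.1) := key1 u.1 u.2.1
          have hcons : Fin.cons (x (Fin.tail u.1)) (Fin.tail u.1) = u.1 := by
            rw [← hu0]; exact Fin.cons_self_tail u.1
          show rankWeight Fq (Fin.cons (x (Fin.tail u.1)) (Fin.tail u.1)) = p
          rw [hcons]; exact u.2.2⟩
        invFun := fun u' => ⟨Fin.cons (x u'.1) u'.1, ⟨key2 u'.1, u'.2⟩⟩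
        left_inv := fun u => Subtype.ext (by
          show Fin.cons (x (Fin.tail u.1)) (Fin.tail u.1) = u.1
          rw [← key1 u.1 u.2.1]; exact Fin.cons_self_tail u.1)
        right_inv := fun u' => Subtype.ext (by simp) }
    rw [Nat.card_congr e1]
    cases p with
    | zero =>
      have hset : {u' : Fin n → Fqm | rankWeight Fq (Fin.cons (x u') u') = 0}
          = {0} := by
        ext u'
        simp only [Set.mem_setOf_eq, Set.mem_singleton_iff, rankWeight_eq_zero_iff]
        constructor
        · intro h
          funext i
          have := congrFun h i.succ
          simpa [Fin.cons_succ] using this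
        · rintro rfl
          have hx0 : x 0 = 0 := by
            rw [hx]
            show -(∑ i : Fin n, (0:Fqm) * v i.succ) / v 0 = 0
            simp
          rw [hx0]
          funext i
          cases i using Fin.cases <;> simp
      rw [hset, FF_zero hq2, Nat.card_coe_set_eq, Set.ncard_singleton]
      norm_num
    | succ p =>
      -- key pair-counting lemma
      have Xcount : ∀ kk : ℕ,
          ((Nat.card {u' : Fin n → Fqm |
              x u' ∈ Submodule.span Fq (Set.range u') ∧ rankWeight Fq u' = kk}) : ℚ)
            = (q:ℚ)^kk * FF q m n kk := by
        intro kk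
        by_cases hkn : kk ≤ n
        · set W : (Fin n → Fq) → (Fin n → Fqm) :=
            fun a => fun i => v i.succ - algebraMap Fq Fqm (a i) * v 0 with hW
          have hWrank : ∀ a, rankWeight Fq (W a) = n := fun a =>
            rankWeight_eq_of_linearIndependent (rankWeight_perturbed hvi a)
          have count1 : (Nat.card {ua : (Fin n → Fqm) × (Fin n → Fq) |
              (∑ i, ua.1 i * W ua.2 i = 0) ∧ rankWeight Fq ua.1 = kk} : ℚ)
              = (q:ℚ)^n * FF q m n kk := by
            rw [← Nat.card_congr (sigmaEquivProdSet
              (fun u a => (∑ i, u i * W a i = 0) ∧ rankWeight Fq u = kk))]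
            rw [nat_card_sigma]
            push_cast
            rw [Finset.sum_congr rfl (fun a _ => IH (W a) (hWrank a) kk)]
            rw [Finset.sum_const, Finset.card_univ, nsmul_eq_mul]
            congr 1
            rw [Fintype.card_fun, hq, Fintype.card_fin]
            push_cast
            ring
          have count2 : (Nat.card {ua : (Fin n → Fqm) × (Fin n → Fq) |
              (∑ i, ua.1 i * W ua.2 i = 0) ∧ rankWeight Fq ua.1 = kk} : ℚ)
              = ((Nat.card {u' : Fin n → Fqm |
                  x u' ∈ Submodule.span Fq (Set.range u') ∧ rankWeight Fq u' = kk}) : ℚ)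
                * (q:ℚ)^(n-kk) := by
            rw [← Nat.card_congr (sigmaEquivProdSet'
              (fun u a => (∑ i, u i * W a i = 0) ∧ rankWeight Fq u = kk))]
            rw [nat_card_sigma]
            push_cast
            have inner : ∀ u : Fin n → Fqm,
                ((Nat.card {a : Fin n → Fq |
                    (∑ i, u i * W a i = 0) ∧ rankWeight Fq u = kk}) : ℚ)
                = if (x u ∈ Submodule.span Fq (Set.range u) ∧ rankWeight Fq u = kk)
                    then (q:ℚ)^(n-kk) else 0 := by
              intro u
              by_cases hrk : rankWeight Fq u = kk
              · have expand : ∀ a : Fin n → Fq,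
                    (∑ i, u i * W a i)
                      = (∑ i, u i * v i.succ) - (∑ i, algebraMap Fq Fqm (a i) * u i) * v 0 := by
                  intro a
                  rw [Finset.sum_mul, ← Finset.sum_sub_distrib]
                  refine Finset.sum_congr rfl fun i _ => ?_
                  show u i * (v i.succ - algebraMap Fq Fqm (a i) * v 0) = _
                  ring
                have hseteq : {a : Fin n → Fq |
                      (∑ i, u i * W a i = 0) ∧ rankWeight Fq u = kk}
                    = {a : Fin n → Fq | ∑ i, algebraMap Fq Fqm (a i) * u i
                        = (∑ i, u i * v i.succ) / v 0} := by
                  ext a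
                  simp only [Set.mem_setOf_eq, hrk, and_true]
                  rw [expand a, sub_eq_zero, eq_div_iff hv0]
                  constructor
                  · intro h; exact h.symm
                  · intro h; exact h.symm
                rw [hseteq, card_fiber hq, hrk]
                have hxmem : x u ∈ Submodule.span Fq (Set.range u)
                    ↔ (∑ i, u i * v i.succ) / v 0 ∈ Submodule.span Fq (Set.range u) := by
                  rw [hx]
                  show -(∑ i : Fin n, u i * v i.succ) / v 0 ∈ _ ↔ _
                  rw [neg_div]
                  exact Submodule.neg_mem_iff _
                by_cases hmem : (∑ i, u i * v i.succ) / v 0 ∈ Submodule.span Fq (Set.range u)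
                · rw [if_pos hmem, if_pos ⟨hxmem.2 hmem, rfl⟩]
                  push_cast
                  ring
                · rw [if_neg hmem, if_neg (fun hc => hmem (hxmem.1 hc.1))]
                  simp
              · have hempty : {a : Fin n → Fq |
                    (∑ i, u i * W a i = 0) ∧ rankWeight Fq u = kk} = ∅ := by
                  ext a
                  simp [hrk]
                rw [hempty, if_neg (fun hc => hrk hc.2)]
                simp
            rw [Finset.sum_congr rfl (fun u _ => inner u)]
            have s3 : (∑ u : Fin n → Fqm,
                if (x u ∈ Submodule.span Fq (Set.range u) ∧ rankWeight Fq u = kk)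
                  then (q:ℚ)^(n-kk) else 0)
                = (Nat.card {u : Fin n → Fqm |
                    x u ∈ Submodule.span Fq (Set.range u) ∧ rankWeight Fq u = kk} : ℚ)
                  * (q:ℚ)^(n-kk) := sum_ite_card _ _
            rw [s3]
          have key := count2.symm.trans count1
          have hpow : (q:ℚ)^(n-kk) * (q:ℚ)^kk = (q:ℚ)^n := by
            rw [← pow_add]
            congr 1
            omega
          have hqnk0 : (q:ℚ)^(n-kk) ≠ 0 := pow_ne_zero _ hq0
          rw [← hpow] at key
          rw [mul_comm (Nat.card _ : ℚ) ((q:ℚ)^(n-kk)), mul_assoc] at key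
          exact mul_left_cancel₀ hqnk0 key
        · have hset : {u' : Fin n → Fqm |
              x u' ∈ Submodule.span Fq (Set.range u') ∧ rankWeight Fq u' = kk} = ∅ := by
            ext u'
            simp only [Set.mem_setOf_eq, Set.mem_empty_iff_false, iff_false, not_and]
            intro _ hrk
            have := rankWeight_le (Fq := Fq) u'
            omega
          rw [hset, FF_eq_zero_of_lt (by omega)]
          simp
      -- split the main set
      have hdisj : Disjoint
          {u' : Fin n → Fqm | x u' ∈ Submodule.span Fq (Set.range u')
            ∧ rankWeight Fq u' = p+1}
          {u' : Fin n → Fqm | x u' ∉ Submodule.span Fq (Set.range u')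
            ∧ rankWeight Fq u' = p} :=
        Set.disjoint_left.mpr (fun u' h1 h2 => h2.1 h1.1)
      have hsplit : {u' : Fin n → Fqm | rankWeight Fq (Fin.cons (x u') u') = p+1}
          = {u' : Fin n → Fqm | x u' ∈ Submodule.span Fq (Set.range u')
              ∧ rankWeight Fq u' = p+1}
            ∪ {u' : Fin n → Fqm | x u' ∉ Submodule.span Fq (Set.range u')
              ∧ rankWeight Fq u' = p} := by
        ext u'
        simp only [Set.mem_setOf_eq, Set.mem_union]
        by_cases hmem : x u' ∈ Submodule.span Fq (Set.range u')
        · rw [rankWeight_cons_mem hmem]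
          simp [hmem]
        · rw [rankWeight_cons_not_mem hmem]
          simp only [hmem, not_false_iff, true_and, false_and, false_or]
          omega
      rw [hsplit, card_union_disjoint hdisj]
      push_cast
      rw [Xcount (p+1)]
      -- second piece
      have hdisj2 : Disjoint
          {u' : Fin n → Fqm | x u' ∈ Submodule.span Fq (Set.range u')
            ∧ rankWeight Fq u' = p}
          {u' : Fin n → Fqm | x u' ∉ Submodule.span Fq (Set.range u')
            ∧ rankWeight Fq u' = p} :=
        Set.disjoint_left.mpr (fun u' h1 h2 => h2.1 h1.1)
      have hsplit2 : {u' : Fin n → Fqm | rankWeight Fq u' = p}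
          = {u' : Fin n → Fqm | x u' ∈ Submodule.span Fq (Set.range u')
              ∧ rankWeight Fq u' = p}
            ∪ {u' : Fin n → Fqm | x u' ∉ Submodule.span Fq (Set.range u')
              ∧ rankWeight Fq u' = p} := by
        ext u'
        simp only [Set.mem_setOf_eq, Set.mem_union]
        by_cases hmem : x u' ∈ Submodule.span Fq (Set.range u') <;> simp [hmem]
      have h2 : ((Nat.card {u' : Fin n → Fqm |
          x u' ∉ Submodule.span Fq (Set.range u') ∧ rankWeight Fq u' = p}) : ℚ)
          = gaussQ q n p * alphaN q m p - (q:ℚ)^p * FF q m n p := by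
        have hsum : ((Nat.card {u' : Fin n → Fqm |
            x u' ∈ Submodule.span Fq (Set.range u') ∧ rankWeight Fq u' = p}) : ℚ)
            + ((Nat.card {u' : Fin n → Fqm |
            x u' ∉ Submodule.span Fq (Set.range u') ∧ rankWeight Fq u' = p}) : ℚ)
            = gaussQ q n p * alphaN q m p := by
          rw [← Nat.cast_add, ← card_union_disjoint hdisj2, ← hsplit2]
          exact Rcount hq hm n p
        rw [Xcount p] at hsum
        linarith
      rw [h2, FF_succ hq2 m n p]
      ring

end Stmt15Aux

/-- The rank weight distribution of the dual `⟨v⟩^⊥` of the one-dimensional code spanned by a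
full-rank vector `v ∈ GF(q^m)^r`: the number of vectors of rank `p` in `⟨v⟩^⊥` is
`[r p]_q (α(m,p) + (q^m - 1)(-1)^p q^{p(p-1)/2}) / q^m`; it depends only on `r`. -/
theorem stmt15 (q m r p : ℕ) (Fq Fqm : Type) [Field Fq] [Fintype Fq] [Field Fqm] [Fintype Fqm]
    [Algebra Fq Fqm] (hq : Fintype.card Fq = q) (hm : Module.finrank Fq Fqm = m)
    (hr : r ≤ m) (hp : p ≤ r)
    (v : Fin r → Fqm) (hv : rankWeight Fq v = r) :
    (Nat.card ↥{u : Fin r → Fqm | (∑ i, u i * v i = 0) ∧ rankWeight Fq u = p} : ℚ)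
      = gaussQ q r p
          * (alphaQ q m p + ((q : ℚ) ^ m - 1) * (-1) ^ p * (q : ℚ) ^ (p * (p - 1) / 2))
          / (q : ℚ) ^ m := by
  rw [show alphaQ q (m:ℤ) p = alphaN q m p from alphaQ_eq_alphaN q m p]
  exact mainCount hq hm r v hv p

end
end
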